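/- arXiv:2602.17347 — 4 statements merged into one kernel-verified Lean document; each statement's English description precedes it below -/
import Mathlib

section
/- For a small category D and an object d of D, the comma category d ↓ p_i is isomorphic to Δ^{op}(D_{d/}), the opposite of the category of simplices of the coslice category D_{d/}. -/
/-!
Since `0` is initial in `Fin (n + 1)`, a path `F : Fin (n + 1) ⥤ D` together with a map
`f : d ⟶ F 0` is the same as a path in `Under d`: the vertex `i` becomes `f ≫ F (0 ⟶ i)`, and
conversely a path in `Under d` is recovered from its image in `D` and the structure map of its
first vertex. A morphism on either side is a simplicial operator `α` compatible with the paths,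
and the condition that it commutes with the maps from `d` is exactly the compatibility of the
lifted paths. Both constructions are inverse on the nose, which gives an isomorphism in `Cat`.
-/
open CategoryTheory Limits
universe u

namespace SCat

variable (D : Type u) [SmallCategory D]

lemma monotone_functor_comp {P Q R : Type*} [Preorder P] [Preorder Q] [Preorder R]
    (f : P →o Q) (g : Q →o R) :
    (g.comp f).monotone.functor = f.monotone.functor ⋙ g.monotone.functor := by
  refine CategoryTheory.Functor.ext (fun _ => rfl) ?_
  intros
  apply Subsingleton.elim

lemma monotone_functor_id {P : Type*} [Preorder P] :
    (OrderHom.id : P →o P).monotone.functor = 𝟭 P := by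
  refine CategoryTheory.Functor.ext (fun _ => rfl) ?_
  intros
  apply Subsingleton.elim

/-- The (opposite) category of simplices `Δᵒᵖ D` of a small category `D`: objects
are paths (functors `[n] ⥤ D`). -/
structure SimplexOfCat where
  n : ℕ
  F : ComposableArrows D n

variable {D}

/-- A morphism `X ⟶ Y` in `Δᵒᵖ D` is a simplicial operator `[Y.n] → [X.n]`
commuting with the functors to `D`. -/
instance : Category (SimplexOfCat D) where
  Hom X Y := {α : Fin (Y.n + 1) →o Fin (X.n + 1) // Y.F = α.monotone.functor ⋙ X.F}
  id X := ⟨OrderHom.id, by rw [monotone_functor_id]; rfl⟩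
  comp {X Y Z} f g := ⟨f.1.comp g.1, by
    rw [monotone_functor_comp, Functor.assoc, ← f.2, ← g.2]⟩
  id_comp f := Subtype.ext (OrderHom.ext _ _ rfl)
  comp_id f := Subtype.ext (OrderHom.ext _ _ rfl)
  assoc f g h := Subtype.ext (OrderHom.ext _ _ rfl)

variable (D)

/-- The initial-vertex functor `p_i : Δᵒᵖ D ⥤ D`, sending a path to its first vertex. -/
def pInit : SimplexOfCat D ⥤ D where
  obj X := X.F.obj 0
  map {X Y} f :=
    X.F.map (homOfLE (Fin.zero_le _) : (0 : Fin (X.n + 1)) ⟶ f.1 0) ≫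
      eqToHom (congrArg (fun G => G.obj (0 : Fin (Y.n + 1))) f.2).symm
  map_id X := by
    change X.F.map (𝟙 _) ≫ eqToHom rfl = 𝟙 _
    simp
  map_comp {X Y Z} f g := by
    have h := Functor.congr_hom f.2
      (homOfLE (Fin.zero_le (g.1 0)) : (0 : Fin (Y.n + 1)) ⟶ g.1 0)
    rw [h]
    simp only [Category.assoc]
    erw [eqToHom_trans_assoc, eqToHom_refl, Category.id_comp, eqToHom_trans,
      ← Functor.map_comp_assoc]
    rfl

end SCat

namespace CategoryTheory

lemma StructuredArrow.hom_hext {C E : Type*} [Category C] [Category E]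
    {e : E} {T : C ⥤ E} {x y x' y' : StructuredArrow e T} (hx : x = x') (hy : y = y')
    {f : x ⟶ y} {g : x' ⟶ y'} (h : f.right ≍ g.right) : f ≍ g := by
  subst hx hy
  exact heq_of_eq (StructuredArrow.hom_ext _ _ (eq_of_heq h))

namespace Under

variable {J J' C : Type*} [Category J] [Category J'] [Category C]
  {j₀ : J} (hj₀ : IsInitial j₀) {c : C}

lemma hom_hext {x y x' y' : Under c} (hx : x = x') (hy : y = y') {f : x ⟶ y} {g : x' ⟶ y'}
    (h : f.right ≍ g.right) : f ≍ g := by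
  subst hx hy
  exact heq_of_eq (UnderMorphism.ext (eq_of_heq h))

def liftOfIsInitial (F : J ⥤ C) (f : c ⟶ F.obj j₀) : J ⥤ Under c where
  obj j := mk (f ≫ F.map (hj₀.to j))
  map g := homMk (F.map g) (by simp [← F.map_comp])

lemma liftOfIsInitial_obj_initial_hom (F : J ⥤ C) (f : c ⟶ F.obj j₀) :
    ((liftOfIsInitial hj₀ F f).obj j₀).hom = f := by
  change f ≫ F.map (hj₀.to j₀) = f
  rw [hj₀.hom_ext (hj₀.to j₀) (𝟙 _), F.map_id, Category.comp_id]

lemma liftOfIsInitial_forget (G : J ⥤ Under c) :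
    liftOfIsInitial hj₀ (G ⋙ forget c) (G.obj j₀).hom = G :=
  have hobj j := congrArg mk (w (G.map (hj₀.to j)))
  Functor.hext hobj (fun i j _ => hom_hext (hobj i) (hobj j) HEq.rfl)

lemma liftOfIsInitial_precomp {j₀' : J'} (hj₀' : IsInitial j₀') (Φ : J' ⥤ J) (F : J ⥤ C)
    (f : c ⟶ F.obj j₀) :
    liftOfIsInitial hj₀' (Φ ⋙ F) (f ≫ F.map (hj₀.to (Φ.obj j₀'))) =
      Φ ⋙ liftOfIsInitial hj₀ F f := by
  have hobj (j : J') : (f ≫ F.map (hj₀.to (Φ.obj j₀'))) ≫ F.map (Φ.map (hj₀'.to j)) =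
      f ≫ F.map (hj₀.to (Φ.obj j)) := by
    rw [Category.assoc, ← F.map_comp, hj₀.hom_ext (hj₀.to _ ≫ _)]
  exact Functor.hext (fun j => congrArg mk (hobj j))
    (fun i j _ => hom_hext (congrArg mk (hobj i)) (congrArg mk (hobj j)) HEq.rfl)

end Under

end CategoryTheory

namespace SCat

variable {D : Type u} [SmallCategory D] {d : D}

lemma SimplexOfCat.hom_hext {X Y X' Y' : SimplexOfCat D} (hX : X = X') (hY : Y = Y')
    {f : X ⟶ Y} {g : X' ⟶ Y'} (h : f.1 ≍ g.1) : f ≍ g := by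
  subst hX hY
  exact heq_of_eq (Subtype.ext (eq_of_heq h))

lemma pInit_map_mk {X : SimplexOfCat D} {n : ℕ} (α : Fin (n + 1) →o Fin (X.n + 1)) :
    (pInit D).map (Y := ⟨n, α.monotone.functor ⋙ X.F⟩) ⟨α, rfl⟩ =
      X.F.map (homOfLE (Fin.zero_le (α 0))) :=
  Category.comp_id _

lemma liftOfIsInitial_pInit_map {X Y : SimplexOfCat D} (α : X ⟶ Y) (f : d ⟶ (pInit D).obj X) :
    Under.liftOfIsInitial (Fin.isInitialZero _) Y.F (f ≫ (pInit D).map α) =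
      α.1.monotone.functor ⋙ Under.liftOfIsInitial (Fin.isInitialZero _) X.F f := by
  obtain ⟨n, F⟩ := Y
  change {α : Fin (n + 1) →o Fin (X.n + 1) // F = α.monotone.functor ⋙ X.F} at α
  obtain ⟨α, rfl⟩ := α
  rw [pInit_map_mk]
  exact Under.liftOfIsInitial_precomp (Fin.isInitialZero _) (Fin.isInitialZero _) _ _ _

def toSimplexUnder : StructuredArrow d (pInit D) ⥤ SimplexOfCat (Under d) where
  obj s := ⟨s.right.n, Under.liftOfIsInitial (Fin.isInitialZero _) s.right.F s.hom⟩
  map {s t} g := ⟨g.right.1, by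
    rw [← StructuredArrow.w g]
    exact liftOfIsInitial_pInit_map g.right s.hom⟩

def ofSimplexUnder : SimplexOfCat (Under d) ⥤ StructuredArrow d (pInit D) where
  obj G := StructuredArrow.mk (Y := (⟨G.n, G.F ⋙ Under.forget d⟩ : SimplexOfCat D))
    (G.F.obj 0).hom
  map {G H} α := StructuredArrow.homMk ⟨α.1, congrArg (· ⋙ Under.forget d) α.2⟩ (by
    obtain ⟨n, F⟩ := H
    change {α : Fin (n + 1) →o Fin (G.n + 1) // F = α.monotone.functor ⋙ G.F} at α
    obtain ⟨α, rfl⟩ := α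
    refine (congrArg ((G.F.obj 0).hom ≫ ·)
      (pInit_map_mk (X := ⟨G.n, G.F ⋙ Under.forget d⟩) α)).trans ?_
    exact Under.w (G.F.map _))

lemma toSimplexUnder_comp_ofSimplexUnder :
    (toSimplexUnder ⋙ ofSimplexUnder : StructuredArrow d (pInit D) ⥤ _) = 𝟭 _ := by
  have hobj (s : StructuredArrow d (pInit D)) : ofSimplexUnder.obj (toSimplexUnder.obj s) = s :=
    (congrArg (StructuredArrow.mk (Y := s.right))
      (Under.liftOfIsInitial_obj_initial_hom (Fin.isInitialZero _) s.right.F s.hom)).trans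
      (StructuredArrow.eq_mk s).symm
  exact Functor.hext hobj fun s t _ => StructuredArrow.hom_hext (hobj s) (hobj t)
    (SimplexOfCat.hom_hext (congrArg Comma.right (hobj s)) (congrArg Comma.right (hobj t)) HEq.rfl)

lemma ofSimplexUnder_comp_toSimplexUnder :
    (ofSimplexUnder ⋙ toSimplexUnder : SimplexOfCat (Under d) ⥤ _) = 𝟭 _ := by
  have hobj (G : SimplexOfCat (Under d)) : toSimplexUnder.obj (ofSimplexUnder.obj G) = G :=
    congrArg (SimplexOfCat.mk G.n) (Under.liftOfIsInitial_forget _ G.F)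
  exact Functor.hext hobj fun G H _ => SimplexOfCat.hom_hext (hobj G) (hobj H) HEq.rfl

end SCat

open SCat in
/-- For a small category `D` and `d : D`, the comma category
`d ↓ p_i` is isomorphic (in `Cat`) to `Δᵒᵖ(D_{d/})`, the (opposite) category of
simplices of the coslice category under `d`. -/
theorem stmt1 (D : Type u) [SmallCategory D] (d : D) :
    Nonempty ((Cat.of (StructuredArrow d (pInit D))) ≅ Cat.of (SimplexOfCat (Under d))) :=
  ⟨⟨toSimplexUnder.toCatHom, ofSimplexUnder.toCatHom,
    Cat.ext toSimplexUnder_comp_ofSimplexUnder, Cat.ext ofSimplexUnder_comp_toSimplexUnder⟩⟩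
end

section
/- For a small category D and an object d of D, the functor m' : p_t^{-1}(d) → (D_{p d /})^{op} sending every object to the identity morphism at p d is final, where p_t^{-1}(d) is the fiber of the last-vertex functor at d; consequently for any cocomplete category C, colimits of diagrams indexed by (D_{p d/})^{op} may be computed after restriction along m'. -/
open CategoryTheory Limits Opposite
universe u

namespace Stmt3

variable (D : Type u) [SmallCategory D]

/-- An object of the fiber `p_t⁻¹(d)` of the last-vertex functor on the category of
simplices of `D`: a path `[n] ⥤ D` whose last vertex is `d`. -/
structure PTFiber (d : D) where
  n : ℕ
  F : ComposableArrows D n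
  last_eq : F.obj (Fin.last n) = d

variable {D}

lemma monotone_functor_comp {P Q R : Type*} [Preorder P] [Preorder Q] [Preorder R]
    (f : P →o Q) (g : Q →o R) :
    (g.comp f).monotone.functor = f.monotone.functor ⋙ g.monotone.functor := by
  refine CategoryTheory.Functor.ext (fun _ => rfl) ?_
  intros
  apply Subsingleton.elim

lemma monotone_functor_id {P : Type*} [Preorder P] :
    (OrderHom.id : P →o P).monotone.functor = 𝟭 P := by
  refine CategoryTheory.Functor.ext (fun _ => rfl) ?_
  intros
  apply Subsingleton.elim

/-- Morphisms in the fiber of the last-vertex functor: monotone maps (simplicial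
operators) over `D` preserving the last element. -/
instance (d : D) : Category (PTFiber D d) where
  Hom X Y := {α : Fin (X.n + 1) →o Fin (Y.n + 1) //
    α (Fin.last _) = Fin.last _ ∧ X.F = α.monotone.functor ⋙ Y.F}
  id X := ⟨OrderHom.id, rfl, by rw [monotone_functor_id]; rfl⟩
  comp {X Y Z} f g := ⟨g.1.comp f.1, by simp [f.2.1, g.2.1], by
    rw [monotone_functor_comp, Functor.assoc, ← g.2.2, ← f.2.2]⟩
  id_comp f := Subtype.ext (OrderHom.ext _ _ rfl)
  comp_id f := Subtype.ext (OrderHom.ext _ _ rfl)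
  assoc f g h := Subtype.ext (OrderHom.ext _ _ rfl)

/-- The functor `m'` sending every object of the fiber `p_t⁻¹(d)` to (the object
corresponding to) the identity morphism at `e`, viewed as the terminal object of
`(D_{e/})ᵒᵖ`. -/
def mPrime (d : D) (e : D) : PTFiber D d ⥤ (Under e)ᵒᵖ :=
  (Functor.const _).obj (op (Under.mk (𝟙 e)))

/-- The zero-simplex at `d`, as an object of the fiber. -/
def obj0 (d : D) : PTFiber D d := ⟨0, ComposableArrows.mk₀ d, rfl⟩

/-- The zero-simplex at `d` maps to any object of the fiber via the last vertex. -/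
def hom0 {d : D} (X : PTFiber D d) : obj0 d ⟶ X :=
  ⟨OrderHom.const _ (Fin.last X.n), rfl, ComposableArrows.ext₀ X.last_eq.symm⟩

lemma final_mPrime (d : D) (e : D) : (mPrime d e).Final := by
  constructor
  intro b
  have hsub : ∀ (f g : b ⟶ op (Under.mk (𝟙 e))), f = g := fun f g =>
    Quiver.Hom.unop_inj (Under.mkIdInitial.hom_ext _ _)
  have h0 : b ⟶ (mPrime d e).obj (obj0 d) := (Under.mkIdInitial.to b.unop).op
  have hne : Nonempty (StructuredArrow b (mPrime d e)) :=
    ⟨StructuredArrow.mk (Y := obj0 d) h0⟩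
  refine zigzag_isConnected fun s₁ s₂ => ?_
  have m₁ : StructuredArrow.mk (Y := obj0 d) h0 ⟶ s₁ :=
    StructuredArrow.homMk (hom0 s₁.right) (hsub _ _)
  have m₂ : StructuredArrow.mk (Y := obj0 d) h0 ⟶ s₂ :=
    StructuredArrow.homMk (hom0 s₂.right) (hsub _ _)
  exact Relation.ReflTransGen.trans
    (Relation.ReflTransGen.single (Or.inr ⟨m₁⟩))
    (Relation.ReflTransGen.single (Or.inl ⟨m₂⟩))

/-- The constant functor `m' : p_t⁻¹(d) ⥤ (D_{e/})ᵒᵖ` at the identity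
of `e` is final; consequently, for any cocomplete category `C`, colimits of diagrams
indexed by `(D_{e/})ᵒᵖ` may be computed after restriction along `m'`. -/
theorem stmt3 (d : D) (e : D) :
    (mPrime d e).Final ∧
      ∀ (C : Type (u + 1)) [Category.{u} C] [HasColimits C]
        (X : (Under e)ᵒᵖ ⥤ C),
        letI : HasColimitsOfSize.{0, u} C := hasColimitsOfSizeShrink.{0, u, u, u} C
        Nonempty (colimit (mPrime d e ⋙ X) ≅ colimit X) := by
  have hf := final_mPrime d e
  refine ⟨hf, fun C _ _ X => ?_⟩
  exact ⟨Functor.Final.colimitIso (mPrime d e) X⟩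

end Stmt3
end

section
/- Let F : C → D be a functor between fibration categories that preserves weak equivalences, sends the terminal object to an object weakly equivalent to the terminal object, and sends pullbacks along fibrations to pullback squares that are homotopy pullbacks. Define C' by the strict pullback of categories C' = (C × D) ×_{D × D} PD along (⟨∂₀,∂₁⟩, F × id). Then C' carries a fibration category structure in which a map is a fibration iff its components in C and D are fibrations and the induced 'gap map' to the pullback in D is a fibration, weak equivalences are componentwise, and the two projections α : C' → C and β : C' → D are exact functors. -/
set_option linter.unusedSectionVars false
open CategoryTheory Limits
universe w v u

/-- A fibration category: weak equivalences and fibrations, a terminal object with all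
objects fibrant, pullbacks along fibrations with (trivial) fibrations stable under base
change, and factorizations of the diagonals. -/
structure FibCatStr (C : Type u) [Category.{v} C] where
  W : MorphismProperty C
  F : MorphismProperty C
  w_iso : ∀ {x y : C} (f : x ⟶ y), IsIso f → W f
  f_iso : ∀ {x y : C} (f : x ⟶ y), IsIso f → F f
  w_comp : ∀ {x y z : C} (f : x ⟶ y) (g : y ⟶ z), W f → W g → W (f ≫ g)
  f_comp : ∀ {x y z : C} (f : x ⟶ y) (g : y ⟶ z), F f → F g → F (f ≫ g)
  w_two_three_left : ∀ {x y z : C} (f : x ⟶ y) (g : y ⟶ z), W f → W (f ≫ g) → W g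
  w_two_three_right : ∀ {x y z : C} (f : x ⟶ y) (g : y ⟶ z), W g → W (f ≫ g) → W f
  term : C
  isTerm : IsTerminal term
  fib_to_term : ∀ x : C, F (isTerm.from x)
  pb_exists : ∀ {x y z : C} (f : x ⟶ z) (p : y ⟶ z), F p →
    ∃ (w : C) (fst : w ⟶ x) (snd : w ⟶ y), IsPullback fst snd f p
  fib_base_change : ∀ {w x y z : C} (fst : w ⟶ x) (snd : w ⟶ y) (f : x ⟶ z) (p : y ⟶ z),
    IsPullback fst snd f p → F p → F fst
  trivfib_base_change : ∀ {w x y z : C} (fst : w ⟶ x) (snd : w ⟶ y) (f : x ⟶ z)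
    (p : y ⟶ z), IsPullback fst snd f p → F p → W p → F fst ∧ W fst
  diag_fact : ∀ {x xx : C} (pr₁ pr₂ : xx ⟶ x),
    IsPullback pr₁ pr₂ (isTerm.from x) (isTerm.from x) →
    ∃ (px : C) (i : x ⟶ px) (q : px ⟶ xx), W i ∧ F q ∧
      i ≫ q ≫ pr₁ = 𝟙 x ∧ i ≫ q ≫ pr₂ = 𝟙 x

/-- An exact functor between fibration categories: it preserves fibrations, weak
equivalences, the terminal object and pullbacks along fibrations. -/
def IsExact {C : Type u} {E : Type w} [Category.{v} C] [Category.{v} E]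
    (S : FibCatStr C) (T : FibCatStr E) (G : C ⥤ E) : Prop :=
  (∀ {x y : C} (f : x ⟶ y), S.F f → T.F (G.map f)) ∧
  (∀ {x y : C} (f : x ⟶ y), S.W f → T.W (G.map f)) ∧
  Nonempty (IsTerminal (G.obj S.term)) ∧
  (∀ {w x y z : C} (fst : w ⟶ x) (snd : w ⟶ y) (f : x ⟶ z) (p : y ⟶ z),
    S.F p → IsPullback fst snd f p →
      IsPullback (G.map fst) (G.map snd) (G.map f) (G.map p))

variable {C : Type u} [Category.{v} C]


variable {C : Type u} [Category.{v} C] {D : Type w} [Category.{v} D]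

/-- A commutative square is a homotopy pullback: after replacing one leg of the cospan
by a weak equivalence followed by a fibration, the comparison map to the pullback along
the fibration is a weak equivalence. -/
def IsHomotopyPB (T : FibCatStr D) {p x y z : D}
    (fst : p ⟶ x) (snd : p ⟶ y) (f : x ⟶ z) (g : y ⟶ z) : Prop :=
  ∃ (y' : D) (j : y ⟶ y') (q : y' ⟶ z), T.W j ∧ T.F q ∧ j ≫ q = g ∧
    ∃ (P : D) (q₁ : P ⟶ x) (q₂ : P ⟶ y'), IsPullback q₁ q₂ f q ∧
      ∃ m : p ⟶ P, T.W m ∧ m ≫ q₁ = fst ∧ m ≫ q₂ = snd ≫ j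

/-- An object of the glued category `C' = (C × D) ×_{D × D} PD`: an object `c` of `C`,
an object `d` of `D`, and a Reedy fibrant span `F(c) ↞ X ↠ d` in `D`. -/
structure GlueObj (S : FibCatStr C) (T : FibCatStr D) (Φ : C ⥤ D) where
  c : C
  d : D
  X : D
  p : X ⟶ Φ.obj c
  q : X ⟶ d
  fib_p : T.F p
  w_p : T.W p
  fib_q : T.F q
  w_q : T.W q
  gap : ∀ {P : D} (pr₁ : P ⟶ Φ.obj c) (pr₂ : P ⟶ d),
    IsPullback pr₁ pr₂ (T.isTerm.from (Φ.obj c)) (T.isTerm.from d) →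
    ∀ g : X ⟶ P, g ≫ pr₁ = p → g ≫ pr₂ = q → T.F g

variable (S : FibCatStr C) (T : FibCatStr D) (Φ : C ⥤ D)

/-- A morphism of the glued category. -/
@[ext]
structure GlueHom (A B : GlueObj S T Φ) where
  fc : A.c ⟶ B.c
  fd : A.d ⟶ B.d
  fX : A.X ⟶ B.X
  wc : A.p ≫ Φ.map fc = fX ≫ B.p
  wd : A.q ≫ fd = fX ≫ B.q

instance : Category (GlueObj S T Φ) where
  Hom A B := GlueHom S T Φ A B
  id A := ⟨𝟙 _, 𝟙 _, 𝟙 _, by simp, by simp⟩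
  comp f g := ⟨f.fc ≫ g.fc, f.fd ≫ g.fd, f.fX ≫ g.fX,
    by rw [Φ.map_comp, ← Category.assoc, f.wc, Category.assoc, g.wc, ← Category.assoc],
    by rw [← Category.assoc, f.wd, Category.assoc, g.wd, ← Category.assoc]⟩
  id_comp f := by apply GlueHom.ext <;> simp [CategoryStruct.comp, CategoryStruct.id]
  comp_id f := by apply GlueHom.ext <;> simp [CategoryStruct.comp, CategoryStruct.id]
  assoc f g h := by apply GlueHom.ext <;> simp [CategoryStruct.comp]

/-- The projection `α : C' ⥤ C`. -/
def projα : GlueObj S T Φ ⥤ C where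
  obj A := A.c
  map f := f.fc
  map_id _ := rfl
  map_comp _ _ := rfl

/-- The projection `β : C' ⥤ D`. -/
def projβ : GlueObj S T Φ ⥤ D where
  obj A := A.d
  map f := f.fd
  map_id _ := rfl
  map_comp _ _ := rfl

/-- The fibrations of the glued category: both components are fibrations and the gap
map to the pullback (of the product-span of the target along the induced map on
products) is a fibration. -/
def GlueFib {A B : GlueObj S T Φ} (f : A ⟶ B) : Prop :=
  S.F f.fc ∧ T.F f.fd ∧
  ∀ {PA : D} (a₁ : PA ⟶ Φ.obj A.c) (a₂ : PA ⟶ A.d)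
    (_ : IsPullback a₁ a₂ (T.isTerm.from (Φ.obj A.c)) (T.isTerm.from A.d))
    {PB : D} (b₁ : PB ⟶ Φ.obj B.c) (b₂ : PB ⟶ B.d)
    (_ : IsPullback b₁ b₂ (T.isTerm.from (Φ.obj B.c)) (T.isTerm.from B.d))
    (gB : B.X ⟶ PB), gB ≫ b₁ = B.p → gB ≫ b₂ = B.q →
    ∀ (u : PA ⟶ PB), u ≫ b₁ = a₁ ≫ Φ.map f.fc → u ≫ b₂ = a₂ ≫ f.fd →
    ∀ {Q : D} (q₁ : Q ⟶ PA) (q₂ : Q ⟶ B.X), IsPullback q₁ q₂ u gB →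
    ∀ (m : A.X ⟶ Q), m ≫ q₂ = f.fX → m ≫ q₁ ≫ a₁ = A.p → m ≫ q₁ ≫ a₂ = A.q →
    T.F m

/-- The weak equivalences of the glued category are componentwise. -/
def GlueW {A B : GlueObj S T Φ} (f : A ⟶ B) : Prop :=
  S.W f.fc ∧ T.W f.fd ∧ T.W f.fX


/-! ### Auxiliary machinery -/

section AuxPB

lemma mk_pb {E : Type*} [Category E] {P X Y Z : E} {fst : P ⟶ X} {snd : P ⟶ Y}
    {f : X ⟶ Z} {g : Y ⟶ Z} (comm : fst ≫ f = snd ≫ g)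
    (lift : ∀ {V : E} (a : V ⟶ X) (b : V ⟶ Y), a ≫ f = b ≫ g → (V ⟶ P))
    (lift_fst : ∀ {V : E} (a : V ⟶ X) (b : V ⟶ Y) (h : a ≫ f = b ≫ g), lift a b h ≫ fst = a)
    (lift_snd : ∀ {V : E} (a : V ⟶ X) (b : V ⟶ Y) (h : a ≫ f = b ≫ g), lift a b h ≫ snd = b)
    (uniq : ∀ {V : E} (m m' : V ⟶ P), m ≫ fst = m' ≫ fst → m ≫ snd = m' ≫ snd → m = m') :
    IsPullback fst snd f g :=
  IsPullback.of_isLimit (PullbackCone.IsLimit.mk comm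
    (fun s => lift s.fst s.snd s.condition)
    (fun s => lift_fst _ _ _) (fun s => lift_snd _ _ _)
    (fun s m h1 h2 => uniq m _ (by rw [lift_fst]; exact h1) (by rw [lift_snd]; exact h2)))

lemma mk_pb' {E : Type*} [Category E] {P X Y Z : E} {fst : P ⟶ X} {snd : P ⟶ Y}
    {f : X ⟶ Z} {g : Y ⟶ Z} (comm : fst ≫ f = snd ≫ g)
    (exlift : ∀ {V : E} (a : V ⟶ X) (b : V ⟶ Y), a ≫ f = b ≫ g →
      ∃ ℓ : V ⟶ P, ℓ ≫ fst = a ∧ ℓ ≫ snd = b)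
    (uniq : ∀ {V : E} (m m' : V ⟶ P), m ≫ fst = m' ≫ fst → m ≫ snd = m' ≫ snd → m = m') :
    IsPullback fst snd f g :=
  mk_pb comm (fun a b h => (exlift a b h).choose)
    (fun a b h => (exlift a b h).choose_spec.1)
    (fun a b h => (exlift a b h).choose_spec.2) uniq

end AuxPB

section FibLemmas

variable {E : Type*} [Category E] (Tf : FibCatStr E)

/-- Brown's factorization lemma. -/
lemma fib_brown {x y : E} (f : x ⟶ y) :
    ∃ (Ev : E) (i : x ⟶ Ev) (τ : Ev ⟶ x) (q : Ev ⟶ y),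
      i ≫ τ = 𝟙 x ∧ Tf.F τ ∧ Tf.W τ ∧ Tf.W i ∧ Tf.F q ∧ i ≫ q = f ∧
      (Tf.W f → Tf.W q) := by
  obtain ⟨yy, pr₁, pr₂, hyy⟩ :=
    Tf.pb_exists (Tf.isTerm.from y) (Tf.isTerm.from y) (Tf.fib_to_term y)
  obtain ⟨Py, ι, dd, hWι, hFdd, he₁, he₂⟩ := Tf.diag_fact pr₁ pr₂ hyy
  have hFpr₁ : Tf.F pr₁ := Tf.fib_base_change _ _ _ _ hyy (Tf.fib_to_term y)
  have hFpr₂ : Tf.F pr₂ := Tf.fib_base_change _ _ _ _ hyy.flip (Tf.fib_to_term y)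
  have hFd₀ : Tf.F (dd ≫ pr₁) := Tf.f_comp _ _ hFdd hFpr₁
  have hWd₀ : Tf.W (dd ≫ pr₁) :=
    Tf.w_two_three_left ι _ hWι (by rw [he₁]; exact Tf.w_iso _ inferInstance)
  obtain ⟨Ev, fst, snd, hE⟩ := Tf.pb_exists f (dd ≫ pr₁) hFd₀
  have hcomm : 𝟙 x ≫ f = (f ≫ ι) ≫ dd ≫ pr₁ := by
    simp only [Category.assoc, Category.id_comp, he₁, Category.comp_id]
  set i : x ⟶ Ev := hE.lift (𝟙 x) (f ≫ ι) hcomm with hidef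
  obtain ⟨hFτ, hWτ⟩ := Tf.trivfib_base_change _ _ _ _ hE hFd₀ hWd₀
  have hiτ : i ≫ fst = 𝟙 x := hE.lift_fst _ _ _
  have hisnd : i ≫ snd = f ≫ ι := hE.lift_snd _ _ _
  have hWi : Tf.W i :=
    Tf.w_two_three_right i fst hWτ (by rw [hiτ]; exact Tf.w_iso _ inferInstance)
  have hiq : i ≫ snd ≫ dd ≫ pr₂ = f := by
    simp only [reassoc_of% hisnd, he₂, Category.comp_id]
  obtain ⟨xy, x₁, x₂, hxy⟩ :=
    Tf.pb_exists (Tf.isTerm.from x) (Tf.isTerm.from y) (Tf.fib_to_term y)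
  set g : Ev ⟶ xy := hxy.lift fst (snd ≫ dd ≫ pr₂) (Tf.isTerm.hom_ext _ _) with hgdef
  have hg₁ : g ≫ x₁ = fst := hxy.lift_fst _ _ _
  have hg₂ : g ≫ x₂ = snd ≫ dd ≫ pr₂ := hxy.lift_snd _ _ _
  set u : xy ⟶ yy := hyy.lift (x₁ ≫ f) x₂ (Tf.isTerm.hom_ext _ _) with hudef
  have hu₁ : u ≫ pr₁ = x₁ ≫ f := hyy.lift_fst _ _ _
  have hu₂ : u ≫ pr₂ = x₂ := hyy.lift_snd _ _ _
  have hGap : IsPullback g snd u dd := by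
    refine mk_pb ?_ (fun {V} a b h => hE.lift (a ≫ x₁) b ?_) ?_ ?_ ?_
    · apply hyy.hom_ext
      · simp only [Category.assoc, hu₁, reassoc_of% hg₁, hE.w]
      · simp only [Category.assoc, hu₂, hg₂]
    · simp only [Category.assoc]
      rw [← hu₁, reassoc_of% h]
    · intro V a b h
      apply hxy.hom_ext
      · simp only [Category.assoc, hg₁, hE.lift_fst]
      · simp only [Category.assoc, hg₂]
        rw [reassoc_of% (hE.lift_snd (a ≫ x₁) b _), reassoc_of% h.symm, hu₂]
    · intro V a b h; exact hE.lift_snd _ _ _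
    · intro V m m' h1 h2
      apply hE.hom_ext
      · rw [← hg₁, ← Category.assoc, ← Category.assoc, h1]
      · exact h2
  have hFg : Tf.F g := Tf.fib_base_change _ _ _ _ hGap hFdd
  have hFx₂ : Tf.F x₂ := Tf.fib_base_change _ _ _ _ hxy.flip (Tf.fib_to_term x)
  have hFq : Tf.F (snd ≫ dd ≫ pr₂) := by
    rw [← hg₂]; exact Tf.f_comp _ _ hFg hFx₂
  exact ⟨Ev, i, fst, snd ≫ dd ≫ pr₂, hiτ, hFτ, hWτ, hWi, hFq, hiq,
    fun hWf => Tf.w_two_three_left i _ hWi (by rw [hiq]; exact hWf)⟩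

/-- Gluing over a base: a weak equivalence between fibrations over `z` pulls back to a
weak equivalence along any map to `z`. -/
lemma fib_glue_base {z y y' x xy xy' : E} {p : y ⟶ z} {p' : y' ⟶ z} {v : y ⟶ y'}
    {ξ : x ⟶ z} {k₁ : xy ⟶ x} {k₂ : xy ⟶ y} {k₁' : xy' ⟶ x} {k₂' : xy' ⟶ y'} {θ : xy ⟶ xy'}
    (hFp : Tf.F p) (hFp' : Tf.F p') (hv : v ≫ p' = p) (hWv : Tf.W v)
    (h1 : IsPullback k₁ k₂ ξ p) (h2 : IsPullback k₁' k₂' ξ p')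
    (e1 : θ ≫ k₁' = k₁) (e2 : θ ≫ k₂' = k₂ ≫ v) : Tf.W θ := by
  obtain ⟨yy, c₁, c₂, hyy⟩ := Tf.pb_exists p' p' hFp'
  set dl : y' ⟶ yy := hyy.lift (𝟙 y') (𝟙 y') rfl with hdl
  have hdl₁ : dl ≫ c₁ = 𝟙 y' := hyy.lift_fst _ _ _
  have hdl₂ : dl ≫ c₂ = 𝟙 y' := hyy.lift_snd _ _ _
  obtain ⟨P, ιP, τP, ρ, hsec, hFτP, hWτP, hWιP, hFρ, hιρ, -⟩ := fib_brown Tf dl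
  have hFc₁ : Tf.F c₁ := Tf.fib_base_change _ _ _ _ hyy hFp'
  have hFc₂ : Tf.F c₂ := Tf.fib_base_change _ _ _ _ hyy.flip hFp'
  have hFd₀ : Tf.F (ρ ≫ c₁) := Tf.f_comp _ _ hFρ hFc₁
  have hιd₀ : ιP ≫ ρ ≫ c₁ = 𝟙 y' := by rw [reassoc_of% hιρ, hdl₁]
  have hιd₁ : ιP ≫ ρ ≫ c₂ = 𝟙 y' := by rw [reassoc_of% hιρ, hdl₂]
  have hWd₀ : Tf.W (ρ ≫ c₁) :=
    Tf.w_two_three_left ιP _ hWιP (by rw [hιd₀]; exact Tf.w_iso _ inferInstance)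
  have hdp : ρ ≫ c₁ ≫ p' = ρ ≫ c₂ ≫ p' := by rw [hyy.w]
  obtain ⟨Ev, fv, sv, hEv⟩ := Tf.pb_exists v (ρ ≫ c₁) hFd₀
  obtain ⟨hFτv, hWτv⟩ := Tf.trivfib_base_change _ _ _ _ hEv hFd₀ hWd₀
  have hivcomm : 𝟙 y ≫ v = (v ≫ ιP) ≫ ρ ≫ c₁ := by
    simp only [Category.assoc, Category.id_comp, hιd₀, Category.comp_id]
  set iv : y ⟶ Ev := hEv.lift (𝟙 y) (v ≫ ιP) hivcomm with hivdef
  have hiv₁ : iv ≫ fv = 𝟙 y := hEv.lift_fst _ _ _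
  have hiv₂ : iv ≫ sv = v ≫ ιP := hEv.lift_snd _ _ _
  have hWiv : Tf.W iv :=
    Tf.w_two_three_right iv fv hWτv (by rw [hiv₁]; exact Tf.w_iso _ inferInstance)
  have hivqv : iv ≫ sv ≫ ρ ≫ c₂ = v := by
    simp only [reassoc_of% hiv₂, hιd₁, Category.comp_id]
  have hWqv : Tf.W (sv ≫ ρ ≫ c₂) :=
    Tf.w_two_three_left iv _ hWiv (by rw [hivqv]; exact hWv)
  have hτvp : sv ≫ ρ ≫ c₂ ≫ p' = fv ≫ p := by
    rw [← hv, reassoc_of% hEv.w, hdp]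
  obtain ⟨yz, f₁, f₂, hyz⟩ := Tf.pb_exists p p' hFp'
  set vz : yz ⟶ yy := hyy.lift (f₁ ≫ v) f₂ (by rw [Category.assoc, hv, hyz.w]) with hvzdef
  have hvz₁ : vz ≫ c₁ = f₁ ≫ v := hyy.lift_fst _ _ _
  have hvz₂ : vz ≫ c₂ = f₂ := hyy.lift_snd _ _ _
  set gv : Ev ⟶ yz := hyz.lift fv (sv ≫ ρ ≫ c₂)
    (by simp only [Category.assoc, hτvp]) with hgvdef
  have hgv₁ : gv ≫ f₁ = fv := hyz.lift_fst _ _ _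
  have hgv₂ : gv ≫ f₂ = sv ≫ ρ ≫ c₂ := hyz.lift_snd _ _ _
  have hGv : IsPullback gv sv vz ρ := by
    refine mk_pb ?_ (fun {V} a b h => hEv.lift (a ≫ f₁) b ?_) ?_ ?_ ?_
    · apply hyy.hom_ext
      · simp only [Category.assoc, hvz₁, reassoc_of% hgv₁, hEv.w]
      · simp only [Category.assoc, hvz₂, hgv₂]
    · simp only [Category.assoc]
      rw [← hvz₁, reassoc_of% h]
    · intro V a b h
      apply hyz.hom_ext
      · simp only [Category.assoc, hgv₁, hEv.lift_fst]
      · simp only [Category.assoc, hgv₂]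
        rw [reassoc_of% (hEv.lift_snd (a ≫ f₁) b _), reassoc_of% h.symm, hvz₂]
    · intro V a b h; exact hEv.lift_snd _ _ _
    · intro V m m' h1' h2'
      apply hEv.hom_ext
      · rw [← hgv₁, ← Category.assoc, ← Category.assoc, h1']
      · exact h2'
  have hFgv : Tf.F gv := Tf.fib_base_change _ _ _ _ hGv hFρ
  have hFf₂ : Tf.F f₂ := Tf.fib_base_change _ _ _ _ hyz.flip hFp
  have hFqv : Tf.F (sv ≫ ρ ≫ c₂) := by
    rw [← hgv₂]; exact Tf.f_comp _ _ hFgv hFf₂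
  obtain ⟨Eh, eh₁, eh₂, hEh⟩ := Tf.pb_exists k₂' (sv ≫ ρ ≫ c₂) hFqv
  obtain ⟨hFeh₁, hWeh₁⟩ := Tf.trivfib_base_change _ _ _ _ hEh hFqv hWqv
  have hrcomm : (eh₁ ≫ k₁') ≫ ξ = (eh₂ ≫ fv) ≫ p := by
    simp only [Category.assoc, h2.w, reassoc_of% hEh.w, hτvp]
  set rh : Eh ⟶ xy := h1.lift (eh₁ ≫ k₁') (eh₂ ≫ fv) hrcomm with hrhdef
  have hrh₁ : rh ≫ k₁ = eh₁ ≫ k₁' := h1.lift_fst _ _ _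
  have hrh₂ : rh ≫ k₂ = eh₂ ≫ fv := h1.lift_snd _ _ _
  have hEsq : IsPullback rh eh₂ k₂ fv := by
    refine mk_pb hrh₂ (fun {V} a b h => hEh.lift
      (h2.lift (a ≫ k₁) (b ≫ sv ≫ ρ ≫ c₂) ?_) b ?_) ?_ ?_ ?_
    · simp only [Category.assoc, h1.w, reassoc_of% h, hτvp]
    · exact h2.lift_snd _ _ _
    · intro V a b h
      apply h1.hom_ext
      · simp only [Category.assoc, hrh₁]
        rw [reassoc_of% (hEh.lift_fst _ b _), h2.lift_fst]
      · simp only [Category.assoc, hrh₂]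
        rw [reassoc_of% (hEh.lift_snd _ b _), h]
    · intro V a b h; exact hEh.lift_snd _ _ _
    · intro V m m' h1' h2'
      apply hEh.hom_ext
      · apply h2.hom_ext
        · simp only [Category.assoc]
          rw [← hrh₁, reassoc_of% h1']
        · simp only [Category.assoc, hEh.w]
          rw [reassoc_of% h2']
      · exact h2'
  obtain ⟨hFrh, hWrh⟩ := Tf.trivfib_base_change _ _ _ _ hEsq hFτv hWτv
  have hiicomm : θ ≫ k₂' = (k₂ ≫ iv) ≫ sv ≫ ρ ≫ c₂ := by
    simp only [Category.assoc, hivqv, e2]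
  set ii : xy ⟶ Eh := hEh.lift θ (k₂ ≫ iv) hiicomm with hiidef
  have hii₁ : ii ≫ eh₁ = θ := hEh.lift_fst _ _ _
  have hii₂ : ii ≫ eh₂ = k₂ ≫ iv := hEh.lift_snd _ _ _
  have hiir : ii ≫ rh = 𝟙 xy := by
    apply h1.hom_ext
    · simp only [Category.assoc, hrh₁, Category.id_comp]
      rw [reassoc_of% hii₁, e1]
    · simp only [Category.assoc, hrh₂, Category.id_comp]
      rw [reassoc_of% hii₂, hiv₁, Category.comp_id]
  have hWii : Tf.W ii :=
    Tf.w_two_three_right ii rh hWrh (by rw [hiir]; exact Tf.w_iso _ inferInstance)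
  rw [← hii₁]
  exact Tf.w_comp _ _ hWii hWeh₁

/-- Right properness: the pullback of a weak equivalence along a fibration is a weak
equivalence. -/
lemma fib_proper {P X Y Z : E} {fst : P ⟶ X} {snd : P ⟶ Y} {f : X ⟶ Z} {p : Y ⟶ Z}
    (h : IsPullback fst snd f p) (hWf : Tf.W f) (hFp : Tf.F p) : Tf.W snd := by
  obtain ⟨Ev, i, τ, q, hiτ, hFτ, hWτ, hWi, hFq, hiq, hWq'⟩ := fib_brown Tf f
  have hWq := hWq' hWf
  obtain ⟨V₁, v₁, v₂, hV₁⟩ := Tf.pb_exists q p hFp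
  obtain ⟨hFv₂, hWv₂⟩ := Tf.trivfib_base_change _ _ _ _ hV₁.flip hFq hWq
  have hFv₁ : Tf.F v₁ := Tf.fib_base_change _ _ _ _ hV₁ hFp
  have hp₂comm : (fst ≫ i) ≫ q = snd ≫ p := by
    rw [Category.assoc, hiq, h.w]
  set p₂ : P ⟶ V₁ := hV₁.lift (fst ≫ i) snd hp₂comm with hp₂def
  have hp₂₁ : p₂ ≫ v₁ = fst ≫ i := hV₁.lift_fst _ _ _
  have hp₂₂ : p₂ ≫ v₂ = snd := hV₁.lift_snd _ _ _
  have hP₂ : IsPullback fst p₂ i v₁ := by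
    refine mk_pb hp₂₁.symm (fun {V} a b hab => h.lift a (b ≫ v₂) ?_) ?_ ?_ ?_
    · rw [← hiq, ← Category.assoc, hab]
      simp only [Category.assoc, hV₁.w]
    · intro V a b hab; exact h.lift_fst _ _ _
    · intro V a b hab
      apply hV₁.hom_ext
      · simp only [Category.assoc, hp₂₁]
        rw [← Category.assoc, h.lift_fst, hab]
      · simp only [Category.assoc, hp₂₂, h.lift_snd]
    · intro V m m' h1 h2
      apply h.hom_ext
      · exact h1
      · rw [← hp₂₂, ← Category.assoc, ← Category.assoc, h2]
  have hFπτ : Tf.F (v₁ ≫ τ) := Tf.f_comp _ _ hFv₁ hFτ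
  obtain ⟨U, u₁, u₂, hU⟩ := Tf.pb_exists τ (v₁ ≫ τ) hFπτ
  obtain ⟨hFu₂, hWu₂⟩ := Tf.trivfib_base_change _ _ _ _ hU.flip hFτ hWτ
  have hFu₁ : Tf.F u₁ := Tf.fib_base_change _ _ _ _ hU hFπτ
  set φM : V₁ ⟶ U := hU.lift v₁ (𝟙 V₁) (by rw [Category.id_comp]) with hφdef
  have hφ₁ : φM ≫ u₁ = v₁ := hU.lift_fst _ _ _
  have hφ₂ : φM ≫ u₂ = 𝟙 V₁ := hU.lift_snd _ _ _
  have hWφ : Tf.W φM :=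
    Tf.w_two_three_right φM u₂ hWu₂ (by rw [hφ₂]; exact Tf.w_iso _ inferInstance)
  obtain ⟨M, m₁, m₂, hM⟩ := Tf.pb_exists i u₁ hFu₁
  have hθcomm : fst ≫ i = (p₂ ≫ φM) ≫ u₁ := by rw [Category.assoc, hφ₁, hp₂₁]
  set θT : P ⟶ M := hM.lift fst (p₂ ≫ φM) hθcomm with hθTdef
  have hθT₁ : θT ≫ m₁ = fst := hM.lift_fst _ _ _
  have hθT₂ : θT ≫ m₂ = p₂ ≫ φM := hM.lift_snd _ _ _
  have hWθT : Tf.W θT := fib_glue_base Tf hFv₁ hFu₁ hφ₁ hWφ hP₂ hM hθT₁ hθT₂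
  have hνUcomm : (v₁ ≫ τ ≫ i) ≫ τ = 𝟙 V₁ ≫ v₁ ≫ τ := by
    simp only [Category.assoc, hiτ, Category.comp_id, Category.id_comp]
  set νU : V₁ ⟶ U := hU.lift (v₁ ≫ τ ≫ i) (𝟙 V₁) hνUcomm with hνUdef
  have hνU₁ : νU ≫ u₁ = v₁ ≫ τ ≫ i := hU.lift_fst _ _ _
  have hνU₂ : νU ≫ u₂ = 𝟙 V₁ := hU.lift_snd _ _ _
  set νM : V₁ ⟶ M := hM.lift (v₁ ≫ τ) νU (by rw [hνU₁, Category.assoc]) with hνMdef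
  have hν₁ : νM ≫ m₁ = v₁ ≫ τ := hM.lift_fst _ _ _
  have hν₂ : νM ≫ m₂ = νU := hM.lift_snd _ _ _
  have hm₁ε : m₂ ≫ u₂ ≫ v₁ ≫ τ = m₁ := by
    conv_rhs => rw [← Category.comp_id m₁, ← hiτ, ← Category.assoc, hM.w, Category.assoc, hU.w]
  have hνε : νM ≫ m₂ ≫ u₂ = 𝟙 V₁ := by rw [reassoc_of% hν₂, hνU₂]
  have hεν : (m₂ ≫ u₂) ≫ νM = 𝟙 M := by
    apply hM.hom_ext
    · simp only [Category.assoc, hν₁, Category.id_comp]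
      exact hm₁ε
    · simp only [Category.assoc, hν₂, Category.id_comp]
      apply hU.hom_ext
      · simp only [Category.assoc, hνU₁]
        rw [reassoc_of% hm₁ε, hM.w]
      · simp only [Category.assoc, hνU₂, Category.comp_id]
  have hWε : Tf.W (m₂ ≫ u₂) := Tf.w_iso _ ⟨νM, hεν, hνε⟩
  have hsndeq : snd = θT ≫ (m₂ ≫ u₂) ≫ v₂ := by
    rw [← Category.assoc, ← Category.assoc, hθT₂]
    simp only [Category.assoc, hφ₂, Category.comp_id, hp₂₂]
  rw [hsndeq]
  exact Tf.w_comp _ _ hWθT (Tf.w_comp _ _ hWε hWv₂)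

/-- Functoriality of binary products (first coordinate). -/
lemma prodmap_fst {x x' y Pxy Pxy' : E} {p₁ : Pxy ⟶ x} {p₂ : Pxy ⟶ y}
    (h : IsPullback p₁ p₂ (Tf.isTerm.from x) (Tf.isTerm.from y))
    {k₁ : Pxy' ⟶ x'} {k₂ : Pxy' ⟶ y}
    (h' : IsPullback k₁ k₂ (Tf.isTerm.from x') (Tf.isTerm.from y))
    (φ : x ⟶ x') {s : Pxy ⟶ Pxy'} (e₁ : s ≫ k₁ = p₁ ≫ φ) (e₂ : s ≫ k₂ = p₂) :
    IsPullback s p₁ k₁ φ := by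
  refine mk_pb e₁ (fun {V} a b hab => h.lift b (a ≫ k₂) (Tf.isTerm.hom_ext _ _)) ?_ ?_ ?_
  · intro V a b hab
    apply h'.hom_ext
    · simp only [Category.assoc, e₁]
      rw [← Category.assoc, h.lift_fst, hab]
    · simp only [Category.assoc, e₂, h.lift_snd]
  · intro V a b hab; exact h.lift_fst _ _ _
  · intro V m m' h1 h2
    apply h.hom_ext
    · exact h2
    · rw [← e₂, ← Category.assoc, ← Category.assoc, h1]

/-- Functoriality of binary products (second coordinate). -/
lemma prodmap_snd {x y y' Pxy Pxy' : E} {p₁ : Pxy ⟶ x} {p₂ : Pxy ⟶ y}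
    (h : IsPullback p₁ p₂ (Tf.isTerm.from x) (Tf.isTerm.from y))
    {k₁ : Pxy' ⟶ x} {k₂ : Pxy' ⟶ y'}
    (h' : IsPullback k₁ k₂ (Tf.isTerm.from x) (Tf.isTerm.from y'))
    (φ : y ⟶ y') {s : Pxy ⟶ Pxy'} (e₁ : s ≫ k₁ = p₁) (e₂ : s ≫ k₂ = p₂ ≫ φ) :
    IsPullback s p₂ k₂ φ := by
  refine mk_pb e₂ (fun {V} a b hab => h.lift (a ≫ k₁) b (Tf.isTerm.hom_ext _ _)) ?_ ?_ ?_
  · intro V a b hab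
    apply h'.hom_ext
    · simp only [Category.assoc, e₁, h.lift_fst]
    · simp only [Category.assoc, e₂]
      rw [← Category.assoc, h.lift_snd, hab]
  · intro V a b hab; exact h.lift_snd _ _ _
  · intro V m m' h1 h2
    apply h.hom_ext
    · rw [← e₁, ← Category.assoc, ← Category.assoc, h1]
    · exact h2

/-- A weak equivalence induces a weak equivalence on products (first coordinate). -/
lemma prodmap_fst_we {x x' y Pxy Pxy' : E} {p₁ : Pxy ⟶ x} {p₂ : Pxy ⟶ y}
    (h : IsPullback p₁ p₂ (Tf.isTerm.from x) (Tf.isTerm.from y))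
    {k₁ : Pxy' ⟶ x'} {k₂ : Pxy' ⟶ y}
    (h' : IsPullback k₁ k₂ (Tf.isTerm.from x') (Tf.isTerm.from y))
    {φ : x ⟶ x'} {s : Pxy ⟶ Pxy'} (e₁ : s ≫ k₁ = p₁ ≫ φ) (e₂ : s ≫ k₂ = p₂)
    (hWφ : Tf.W φ) : Tf.W s := by
  obtain ⟨Eφ, i, τ, q, hiτ, hFτ, hWτ, hWi, hFq, hiq, hWq'⟩ := fib_brown Tf φ
  have hWq := hWq' hWφ
  obtain ⟨PE, g₁, g₂, hPE⟩ :=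
    Tf.pb_exists (Tf.isTerm.from Eφ) (Tf.isTerm.from y) (Tf.fib_to_term y)
  set sτ : PE ⟶ Pxy := h.lift (g₁ ≫ τ) g₂ (Tf.isTerm.hom_ext _ _) with hsτdef
  have hsτ₁ : sτ ≫ p₁ = g₁ ≫ τ := h.lift_fst _ _ _
  have hsτ₂ : sτ ≫ p₂ = g₂ := h.lift_snd _ _ _
  have hsτpb : IsPullback sτ g₁ p₁ τ := prodmap_fst Tf hPE h τ hsτ₁ hsτ₂
  obtain ⟨hFsτ, hWsτ⟩ := Tf.trivfib_base_change _ _ _ _ hsτpb hFτ hWτ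
  set si : Pxy ⟶ PE := hPE.lift (p₁ ≫ i) p₂ (Tf.isTerm.hom_ext _ _) with hsidef
  have hsi₁ : si ≫ g₁ = p₁ ≫ i := hPE.lift_fst _ _ _
  have hsi₂ : si ≫ g₂ = p₂ := hPE.lift_snd _ _ _
  have hsiτ : si ≫ sτ = 𝟙 Pxy := by
    apply h.hom_ext
    · simp only [Category.assoc, hsτ₁, Category.id_comp]
      rw [reassoc_of% hsi₁, hiτ, Category.comp_id]
    · simp only [Category.assoc, hsτ₂, hsi₂, Category.id_comp]
  have hWsi : Tf.W si :=
    Tf.w_two_three_right si sτ hWsτ (by rw [hsiτ]; exact Tf.w_iso _ inferInstance)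
  set sq : PE ⟶ Pxy' := h'.lift (g₁ ≫ q) g₂ (Tf.isTerm.hom_ext _ _) with hsqdef
  have hsq₁ : sq ≫ k₁ = g₁ ≫ q := h'.lift_fst _ _ _
  have hsq₂ : sq ≫ k₂ = g₂ := h'.lift_snd _ _ _
  have hsqpb : IsPullback sq g₁ k₁ q := prodmap_fst Tf hPE h' q hsq₁ hsq₂
  obtain ⟨hFsq, hWsq⟩ := Tf.trivfib_base_change _ _ _ _ hsqpb hFq hWq
  have hseq : s = si ≫ sq := by
    apply h'.hom_ext
    · simp only [Category.assoc, e₁, hsq₁]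
      rw [reassoc_of% hsi₁, hiq]
    · simp only [Category.assoc, e₂, hsq₂, hsi₂]
  rw [hseq]
  exact Tf.w_comp _ _ hWsi hWsq

end FibLemmas

section GlueBasics

lemma glue_comp_fc {A B Z : GlueObj S T Φ} (f : A ⟶ B) (g : B ⟶ Z) :
    (f ≫ g).fc = f.fc ≫ g.fc := rfl

lemma glue_comp_fd {A B Z : GlueObj S T Φ} (f : A ⟶ B) (g : B ⟶ Z) :
    (f ≫ g).fd = f.fd ≫ g.fd := rfl

lemma glue_comp_fX {A B Z : GlueObj S T Φ} (f : A ⟶ B) (g : B ⟶ Z) :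
    (f ≫ g).fX = f.fX ≫ g.fX := rfl

lemma glue_id_fc (A : GlueObj S T Φ) : (𝟙 A : A ⟶ A).fc = 𝟙 A.c := rfl
lemma glue_id_fd (A : GlueObj S T Φ) : (𝟙 A : A ⟶ A).fd = 𝟙 A.d := rfl
lemma glue_id_fX (A : GlueObj S T Φ) : (𝟙 A : A ⟶ A).fX = 𝟙 A.X := rfl

lemma glue_hom_ext {A B : GlueObj S T Φ} {f g : A ⟶ B}
    (h1 : f.fc = g.fc) (h2 : f.fd = g.fd) (h3 : f.fX = g.fX) : f = g :=
  GlueHom.ext h1 h2 h3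

lemma glue_isIso_comps {A B : GlueObj S T Φ} (f : A ⟶ B) (hf : IsIso f) :
    IsIso f.fc ∧ IsIso f.fd ∧ IsIso f.fX := by
  obtain ⟨g, hfg, hgf⟩ := hf
  exact ⟨⟨g.fc, congrArg GlueHom.fc hfg, congrArg GlueHom.fc hgf⟩,
    ⟨g.fd, congrArg GlueHom.fd hfg, congrArg GlueHom.fd hgf⟩,
    ⟨g.fX, congrArg GlueHom.fX hfg, congrArg GlueHom.fX hgf⟩⟩

lemma glueW_comp {A B Z : GlueObj S T Φ} (f : A ⟶ B) (g : B ⟶ Z)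
    (hf : GlueW S T Φ f) (hg : GlueW S T Φ g) : GlueW S T Φ (f ≫ g) :=
  ⟨S.w_comp _ _ hf.1 hg.1, T.w_comp _ _ hf.2.1 hg.2.1, T.w_comp _ _ hf.2.2 hg.2.2⟩

lemma glueW_iso {A B : GlueObj S T Φ} (f : A ⟶ B) (hf : IsIso f) : GlueW S T Φ f := by
  obtain ⟨h1, h2, h3⟩ := glue_isIso_comps S T Φ f hf
  exact ⟨S.w_iso _ h1, T.w_iso _ h2, T.w_iso _ h3⟩

/-- Transport of the object-level gap condition between different choices of products. -/
lemma gap_intro {c : C} {d X : D} (p : X ⟶ Φ.obj c) (q : X ⟶ d)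
    {P₀ : D} {w₁ : P₀ ⟶ Φ.obj c} {w₂ : P₀ ⟶ d}
    (h₀ : IsPullback w₁ w₂ (T.isTerm.from (Φ.obj c)) (T.isTerm.from d))
    (g₀ : X ⟶ P₀) (e₁ : g₀ ≫ w₁ = p) (e₂ : g₀ ≫ w₂ = q) (hF : T.F g₀) :
    ∀ {P : D} (pr₁ : P ⟶ Φ.obj c) (pr₂ : P ⟶ d),
      IsPullback pr₁ pr₂ (T.isTerm.from (Φ.obj c)) (T.isTerm.from d) →
      ∀ g : X ⟶ P, g ≫ pr₁ = p → g ≫ pr₂ = q → T.F g := by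
  intro P pr₁ pr₂ hP g hg₁ hg₂
  set e : P₀ ⟶ P := hP.lift w₁ w₂ (T.isTerm.hom_ext _ _) with hedef
  have he₁ : e ≫ pr₁ = w₁ := hP.lift_fst _ _ _
  have he₂ : e ≫ pr₂ = w₂ := hP.lift_snd _ _ _
  set e' : P ⟶ P₀ := h₀.lift pr₁ pr₂ (T.isTerm.hom_ext _ _) with he'def
  have he'₁ : e' ≫ w₁ = pr₁ := h₀.lift_fst _ _ _
  have he'₂ : e' ≫ w₂ = pr₂ := h₀.lift_snd _ _ _
  have hee' : e ≫ e' = 𝟙 P₀ := by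
    apply h₀.hom_ext <;>
      simp only [Category.assoc, he'₁, he'₂, he₁, he₂, Category.id_comp]
  have he'e : e' ≫ e = 𝟙 P := by
    apply hP.hom_ext <;>
      simp only [Category.assoc, he'₁, he'₂, he₁, he₂, Category.id_comp]
  have hge : g = g₀ ≫ e := by
    apply hP.hom_ext <;> simp only [Category.assoc, he₁, he₂, hg₁, hg₂, e₁, e₂]
  rw [hge]
  exact T.f_comp _ _ hF (T.f_iso e ⟨e', hee', he'e⟩)

/-- To establish `GlueFib`, it suffices to verify the gap condition for one choice of
the auxiliary pullbacks. -/
lemma glueFib_intro {A B : GlueObj S T Φ} (f : A ⟶ B)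
    (h1 : S.F f.fc) (h2 : T.F f.fd)
    {PA : D} {a₁ : PA ⟶ Φ.obj A.c} {a₂ : PA ⟶ A.d}
    (hPA : IsPullback a₁ a₂ (T.isTerm.from (Φ.obj A.c)) (T.isTerm.from A.d))
    {PB : D} {b₁ : PB ⟶ Φ.obj B.c} {b₂ : PB ⟶ B.d}
    (hPB : IsPullback b₁ b₂ (T.isTerm.from (Φ.obj B.c)) (T.isTerm.from B.d))
    {gB : B.X ⟶ PB} (hgB₁ : gB ≫ b₁ = B.p) (hgB₂ : gB ≫ b₂ = B.q)
    {u : PA ⟶ PB} (hu₁ : u ≫ b₁ = a₁ ≫ Φ.map f.fc) (hu₂ : u ≫ b₂ = a₂ ≫ f.fd)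
    {Q : D} {q₁ : Q ⟶ PA} {q₂ : Q ⟶ B.X} (hQ : IsPullback q₁ q₂ u gB)
    {m : A.X ⟶ Q} (hm₂ : m ≫ q₂ = f.fX) (hmp : m ≫ q₁ ≫ a₁ = A.p)
    (hmq : m ≫ q₁ ≫ a₂ = A.q) (hFm : T.F m) : GlueFib S T Φ f := by
  refine ⟨h1, h2, ?_⟩
  intro PA' a₁' a₂' hPA' PB' b₁' b₂' hPB' gB' hgB₁' hgB₂' u' hu₁' hu₂' Q' q₁' q₂' hQ'
    m' hm₂' hmp' hmq'
  set ePA : PA ⟶ PA' := hPA'.lift a₁ a₂ (T.isTerm.hom_ext _ _) with hePAdef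
  have hePA₁ : ePA ≫ a₁' = a₁ := hPA'.lift_fst _ _ _
  have hePA₂ : ePA ≫ a₂' = a₂ := hPA'.lift_snd _ _ _
  set ePA' : PA' ⟶ PA := hPA.lift a₁' a₂' (T.isTerm.hom_ext _ _) with hePA'def
  have hePA'₁ : ePA' ≫ a₁ = a₁' := hPA.lift_fst _ _ _
  have hePA'₂ : ePA' ≫ a₂ = a₂' := hPA.lift_snd _ _ _
  have hPAiso : ePA ≫ ePA' = 𝟙 PA := by
    apply hPA.hom_ext <;>
      simp only [Category.assoc, hePA₁, hePA₂, hePA'₁, hePA'₂, Category.id_comp]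
  have hPAiso' : ePA' ≫ ePA = 𝟙 PA' := by
    apply hPA'.hom_ext <;>
      simp only [Category.assoc, hePA₁, hePA₂, hePA'₁, hePA'₂, Category.id_comp]
  set ePB : PB ⟶ PB' := hPB'.lift b₁ b₂ (T.isTerm.hom_ext _ _) with hePBdef
  have hePB₁ : ePB ≫ b₁' = b₁ := hPB'.lift_fst _ _ _
  have hePB₂ : ePB ≫ b₂' = b₂ := hPB'.lift_snd _ _ _
  set ePB' : PB' ⟶ PB := hPB.lift b₁' b₂' (T.isTerm.hom_ext _ _) with hePB'def
  have hePB'₁ : ePB' ≫ b₁ = b₁' := hPB.lift_fst _ _ _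
  have hePB'₂ : ePB' ≫ b₂ = b₂' := hPB.lift_snd _ _ _
  have hgB'e : gB' = gB ≫ ePB := by
    apply hPB'.hom_ext <;>
      simp only [Category.assoc, hePB₁, hePB₂, hgB₁, hgB₂, hgB₁', hgB₂']
  have hgB'e' : gB' ≫ ePB' = gB := by
    apply hPB.hom_ext <;>
      simp only [Category.assoc, hePB'₁, hePB'₂, hgB₁, hgB₂, hgB₁', hgB₂']
  have hue : ePA ≫ u' = u ≫ ePB := by
    apply hPB'.hom_ext <;>
      simp only [Category.assoc, hePB₁, hePB₂, hu₁', hu₂', hu₁, hu₂, reassoc_of% hePA₁,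
        reassoc_of% hePA₂]
  have hue' : ePA' ≫ u = u' ≫ ePB' := by
    apply hPB.hom_ext <;>
      simp only [Category.assoc, hePB'₁, hePB'₂, hu₁', hu₂', hu₁, hu₂, reassoc_of% hePA'₁,
        reassoc_of% hePA'₂]
  set eQ : Q ⟶ Q' := hQ'.lift (q₁ ≫ ePA) q₂ (by
    simp only [Category.assoc, hue]
    rw [← Category.assoc, hQ.w, Category.assoc, hgB'e]) with heQdef
  have heQ₁ : eQ ≫ q₁' = q₁ ≫ ePA := hQ'.lift_fst _ _ _
  have heQ₂ : eQ ≫ q₂' = q₂ := hQ'.lift_snd _ _ _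
  set eQ' : Q' ⟶ Q := hQ.lift (q₁' ≫ ePA') q₂' (by
    simp only [Category.assoc, hue']
    rw [← Category.assoc, hQ'.w, Category.assoc, hgB'e']) with heQ'def
  have heQ'₁ : eQ' ≫ q₁ = q₁' ≫ ePA' := hQ.lift_fst _ _ _
  have heQ'₂ : eQ' ≫ q₂ = q₂' := hQ.lift_snd _ _ _
  have hQiso : eQ ≫ eQ' = 𝟙 Q := by
    apply hQ.hom_ext
    · simp only [Category.assoc, heQ'₁, Category.id_comp]
      rw [reassoc_of% heQ₁, hPAiso, Category.comp_id]
    · simp only [Category.assoc, heQ'₂, heQ₂, Category.id_comp]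
  have hQiso' : eQ' ≫ eQ = 𝟙 Q' := by
    apply hQ'.hom_ext
    · simp only [Category.assoc, heQ₁, Category.id_comp]
      rw [reassoc_of% heQ'₁, hPAiso', Category.comp_id]
    · simp only [Category.assoc, heQ'₂, heQ₂, Category.id_comp]
  have hm'eq : m' = m ≫ eQ := by
    apply hQ'.hom_ext
    · apply hPA'.hom_ext
      · simp only [Category.assoc, hmp']
        rw [reassoc_of% heQ₁]
        simp only [hePA₁, hmp]
      · simp only [Category.assoc, hmq']
        rw [reassoc_of% heQ₁]
        simp only [hePA₂, hmq]
    · simp only [Category.assoc, heQ₂, hm₂, hm₂']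
  rw [hm'eq]
  exact T.f_comp _ _ hFm (T.f_iso eQ ⟨eQ', hQiso, hQiso'⟩)

/-- Isomorphisms of the glued category are fibrations. -/
lemma glueFib_of_iso {A B : GlueObj S T Φ} (f : A ⟶ B) (hf : IsIso f) :
    GlueFib S T Φ f := by
  obtain ⟨hic, hid, hiX⟩ := glue_isIso_comps S T Φ f hf
  haveI := hic; haveI := hid; haveI := hiX
  obtain ⟨PA, a₁, a₂, hPA⟩ :=
    T.pb_exists (T.isTerm.from (Φ.obj A.c)) (T.isTerm.from A.d) (T.fib_to_term _)
  obtain ⟨PB, b₁, b₂, hPB⟩ :=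
    T.pb_exists (T.isTerm.from (Φ.obj B.c)) (T.isTerm.from B.d) (T.fib_to_term _)
  set gA : A.X ⟶ PA := hPA.lift A.p A.q (T.isTerm.hom_ext _ _) with hgAdef
  have hgA₁ : gA ≫ a₁ = A.p := hPA.lift_fst _ _ _
  have hgA₂ : gA ≫ a₂ = A.q := hPA.lift_snd _ _ _
  have hFgA : T.F gA := A.gap a₁ a₂ hPA gA hgA₁ hgA₂
  set gB : B.X ⟶ PB := hPB.lift B.p B.q (T.isTerm.hom_ext _ _) with hgBdef
  have hgB₁ : gB ≫ b₁ = B.p := hPB.lift_fst _ _ _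
  have hgB₂ : gB ≫ b₂ = B.q := hPB.lift_snd _ _ _
  have hFgB : T.F gB := B.gap b₁ b₂ hPB gB hgB₁ hgB₂
  set u : PA ⟶ PB := hPB.lift (a₁ ≫ Φ.map f.fc) (a₂ ≫ f.fd) (T.isTerm.hom_ext _ _) with hudef
  have hu₁ : u ≫ b₁ = a₁ ≫ Φ.map f.fc := hPB.lift_fst _ _ _
  have hu₂ : u ≫ b₂ = a₂ ≫ f.fd := hPB.lift_snd _ _ _
  set uinv : PB ⟶ PA := hPA.lift (b₁ ≫ inv (Φ.map f.fc)) (b₂ ≫ inv f.fd)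
    (T.isTerm.hom_ext _ _) with huinvdef
  have huinv₁ : uinv ≫ a₁ = b₁ ≫ inv (Φ.map f.fc) := hPA.lift_fst _ _ _
  have huinv₂ : uinv ≫ a₂ = b₂ ≫ inv f.fd := hPA.lift_snd _ _ _
  have huui : u ≫ uinv = 𝟙 PA := by
    apply hPA.hom_ext <;>
      simp only [Category.assoc, hu₁, hu₂, reassoc_of% huinv₁, reassoc_of% huinv₂,
        Category.id_comp, IsIso.inv_hom_id, Category.comp_id, reassoc_of% hu₁,
        reassoc_of% hu₂, huinv₁, huinv₂, IsIso.hom_inv_id]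
  have huiu : uinv ≫ u = 𝟙 PB := by
    apply hPB.hom_ext <;>
      simp only [Category.assoc, hu₁, hu₂, reassoc_of% huinv₁, reassoc_of% huinv₂,
        Category.id_comp, IsIso.inv_hom_id, Category.comp_id, reassoc_of% hu₁,
        reassoc_of% hu₂, huinv₁, huinv₂, IsIso.hom_inv_id, IsIso.inv_hom_id_assoc]
  obtain ⟨Q, q₁, q₂, hQ⟩ := T.pb_exists u gB hFgB
  have hmcomm : gA ≫ u = f.fX ≫ gB := by
    apply hPB.hom_ext
    · simp only [Category.assoc, hu₁, hgB₁, reassoc_of% hgA₁, f.wc]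
    · simp only [Category.assoc, hu₂, hgB₂, reassoc_of% hgA₂, f.wd]
  set m : A.X ⟶ Q := hQ.lift gA f.fX hmcomm with hmdef
  have hm₁ : m ≫ q₁ = gA := hQ.lift_fst _ _ _
  have hm₂ : m ≫ q₂ = f.fX := hQ.lift_snd _ _ _
  set ell : B.X ⟶ Q := hQ.lift (gB ≫ uinv) (𝟙 B.X) (by
    simp only [Category.assoc, huiu, Category.comp_id, Category.id_comp]) with helldef
  have hell₁ : ell ≫ q₁ = gB ≫ uinv := hQ.lift_fst _ _ _
  have hell₂ : ell ≫ q₂ = 𝟙 B.X := hQ.lift_snd _ _ _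
  have hmeq : m = f.fX ≫ ell := by
    apply hQ.hom_ext
    · simp only [Category.assoc, hm₁, hell₁]
      rw [← reassoc_of% hmcomm, huui, Category.comp_id]
    · simp only [Category.assoc, hm₂, hell₂, Category.comp_id]
  have hq₂ell : q₂ ≫ ell = 𝟙 Q := by
    apply hQ.hom_ext
    · simp only [Category.assoc, hell₁, Category.id_comp]
      rw [← reassoc_of% hQ.w, huui, Category.comp_id]
    · simp only [Category.assoc, hell₂, Category.comp_id, Category.id_comp]
  have hFm : T.F m := by
    rw [hmeq]
    haveI : IsIso ell := ⟨q₂, hell₂, hq₂ell⟩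
    exact T.f_iso _ inferInstance
  exact glueFib_intro S T Φ f (S.f_iso _ hic) (T.f_iso _ hid) hPA hPB hgB₁ hgB₂ hu₁ hu₂ hQ
    hm₂ (by rw [reassoc_of% hm₁, hgA₁]) (by rw [reassoc_of% hm₁, hgA₂]) hFm

/-- Fibrations of the glued category are closed under composition. -/
lemma glueFib_comp {A B Z : GlueObj S T Φ} (f : A ⟶ B) (g : B ⟶ Z)
    (hf : GlueFib S T Φ f) (hg : GlueFib S T Φ g) : GlueFib S T Φ (f ≫ g) := by
  obtain ⟨PA, a₁, a₂, hPA⟩ :=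
    T.pb_exists (T.isTerm.from (Φ.obj A.c)) (T.isTerm.from A.d) (T.fib_to_term _)
  obtain ⟨PB, b₁, b₂, hPB⟩ :=
    T.pb_exists (T.isTerm.from (Φ.obj B.c)) (T.isTerm.from B.d) (T.fib_to_term _)
  obtain ⟨PZ, z₁, z₂, hPZ⟩ :=
    T.pb_exists (T.isTerm.from (Φ.obj Z.c)) (T.isTerm.from Z.d) (T.fib_to_term _)
  set gA : A.X ⟶ PA := hPA.lift A.p A.q (T.isTerm.hom_ext _ _) with hgAdef
  have hgA₁ : gA ≫ a₁ = A.p := hPA.lift_fst _ _ _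
  have hgA₂ : gA ≫ a₂ = A.q := hPA.lift_snd _ _ _
  set gB : B.X ⟶ PB := hPB.lift B.p B.q (T.isTerm.hom_ext _ _) with hgBdef
  have hgB₁ : gB ≫ b₁ = B.p := hPB.lift_fst _ _ _
  have hgB₂ : gB ≫ b₂ = B.q := hPB.lift_snd _ _ _
  have hFgB : T.F gB := B.gap b₁ b₂ hPB gB hgB₁ hgB₂
  set gZ : Z.X ⟶ PZ := hPZ.lift Z.p Z.q (T.isTerm.hom_ext _ _) with hgZdef
  have hgZ₁ : gZ ≫ z₁ = Z.p := hPZ.lift_fst _ _ _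
  have hgZ₂ : gZ ≫ z₂ = Z.q := hPZ.lift_snd _ _ _
  have hFgZ : T.F gZ := Z.gap z₁ z₂ hPZ gZ hgZ₁ hgZ₂
  set u₁ : PA ⟶ PB := hPB.lift (a₁ ≫ Φ.map f.fc) (a₂ ≫ f.fd) (T.isTerm.hom_ext _ _) with hu₁def
  have hu₁₁ : u₁ ≫ b₁ = a₁ ≫ Φ.map f.fc := hPB.lift_fst _ _ _
  have hu₁₂ : u₁ ≫ b₂ = a₂ ≫ f.fd := hPB.lift_snd _ _ _
  set u₂ : PB ⟶ PZ := hPZ.lift (b₁ ≫ Φ.map g.fc) (b₂ ≫ g.fd) (T.isTerm.hom_ext _ _) with hu₂def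
  have hu₂₁ : u₂ ≫ z₁ = b₁ ≫ Φ.map g.fc := hPZ.lift_fst _ _ _
  have hu₂₂ : u₂ ≫ z₂ = b₂ ≫ g.fd := hPZ.lift_snd _ _ _
  set u : PA ⟶ PZ := hPZ.lift (a₁ ≫ Φ.map (f ≫ g).fc) (a₂ ≫ (f ≫ g).fd)
    (T.isTerm.hom_ext _ _) with hudef
  have hu₁' : u ≫ z₁ = a₁ ≫ Φ.map (f ≫ g).fc := hPZ.lift_fst _ _ _
  have hu₂' : u ≫ z₂ = a₂ ≫ (f ≫ g).fd := hPZ.lift_snd _ _ _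
  have huu : u₁ ≫ u₂ = u := by
    apply hPZ.hom_ext
    · simp only [Category.assoc, hu₂₁, hu₁', reassoc_of% hu₁₁, glue_comp_fc, Φ.map_comp]
    · simp only [Category.assoc, hu₂₂, hu₂', reassoc_of% hu₁₂, glue_comp_fd]
  obtain ⟨Qg, r₁, r₂, hQg⟩ := T.pb_exists u₂ gZ hFgZ
  have hmgcomm : gB ≫ u₂ = g.fX ≫ gZ := by
    apply hPZ.hom_ext
    · simp only [Category.assoc, hu₂₁, hgZ₁, reassoc_of% hgB₁, g.wc]
    · simp only [Category.assoc, hu₂₂, hgZ₂, reassoc_of% hgB₂, g.wd]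
  set mg : B.X ⟶ Qg := hQg.lift gB g.fX hmgcomm with hmgdef
  have hmg₁ : mg ≫ r₁ = gB := hQg.lift_fst _ _ _
  have hmg₂ : mg ≫ r₂ = g.fX := hQg.lift_snd _ _ _
  have hFmg : T.F mg := hg.2.2 b₁ b₂ hPB z₁ z₂ hPZ gZ hgZ₁ hgZ₂ u₂ hu₂₁ hu₂₂ r₁ r₂ hQg mg
    hmg₂ (by rw [reassoc_of% hmg₁, hgB₁]) (by rw [reassoc_of% hmg₁, hgB₂])
  obtain ⟨Qf, s₁, s₂, hQf⟩ := T.pb_exists u₁ gB hFgB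
  have hmfcomm : gA ≫ u₁ = f.fX ≫ gB := by
    apply hPB.hom_ext
    · simp only [Category.assoc, hu₁₁, hgB₁, reassoc_of% hgA₁, f.wc]
    · simp only [Category.assoc, hu₁₂, hgB₂, reassoc_of% hgA₂, f.wd]
  set mf : A.X ⟶ Qf := hQf.lift gA f.fX hmfcomm with hmfdef
  have hmf₁ : mf ≫ s₁ = gA := hQf.lift_fst _ _ _
  have hmf₂ : mf ≫ s₂ = f.fX := hQf.lift_snd _ _ _
  have hFmf : T.F mf := hf.2.2 a₁ a₂ hPA b₁ b₂ hPB gB hgB₁ hgB₂ u₁ hu₁₁ hu₁₂ s₁ s₂ hQf mf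
    hmf₂ (by rw [reassoc_of% hmf₁, hgA₁]) (by rw [reassoc_of% hmf₁, hgA₂])
  obtain ⟨Q, q₁, q₂, hQ⟩ := T.pb_exists u gZ hFgZ
  set tQ : Q ⟶ Qg := hQg.lift (q₁ ≫ u₁) q₂ (by
    simp only [Category.assoc, huu, hQ.w]) with htQdef
  have htQ₁ : tQ ≫ r₁ = q₁ ≫ u₁ := hQg.lift_fst _ _ _
  have htQ₂ : tQ ≫ r₂ = q₂ := hQg.lift_snd _ _ _
  have hP1 : IsPullback q₁ tQ u₁ r₁ := by
    refine mk_pb htQ₁.symm (fun {V} a b hab => hQ.lift a (b ≫ r₂) ?_) ?_ ?_ ?_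
    · rw [← huu, ← Category.assoc, hab]
      simp only [Category.assoc, hQg.w]
    · intro V a b hab; exact hQ.lift_fst _ _ _
    · intro V a b hab
      apply hQg.hom_ext
      · simp only [Category.assoc, htQ₁]
        rw [← Category.assoc, hQ.lift_fst, hab]
      · simp only [Category.assoc, htQ₂, hQ.lift_snd]
    · intro V m m' h1' h2'
      apply hQ.hom_ext
      · exact h1'
      · rw [← htQ₂, ← Category.assoc, ← Category.assoc, h2']
  set k : Qf ⟶ Q := hP1.lift s₁ (s₂ ≫ mg) (by
    simp only [Category.assoc, hmg₁, hQf.w]) with hkdef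
  have hk₁ : k ≫ q₁ = s₁ := hP1.lift_fst _ _ _
  have hk₂ : k ≫ tQ = s₂ ≫ mg := hP1.lift_snd _ _ _
  have hP2 : IsPullback k s₂ tQ mg := by
    refine mk_pb hk₂ (fun {V} a b hab => hQf.lift (a ≫ q₁) b ?_) ?_ ?_ ?_
    · rw [Category.assoc, ← htQ₁, ← Category.assoc, hab]
      simp only [Category.assoc, hmg₁]
    · intro V a b hab
      apply hP1.hom_ext
      · simp only [Category.assoc, hk₁, hQf.lift_fst]
      · simp only [Category.assoc, hk₂]
        rw [reassoc_of% (hQf.lift_snd (a ≫ q₁) b _), hab]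
    · intro V a b hab; exact hQf.lift_snd _ _ _
    · intro V m m' h1' h2'
      apply hQf.hom_ext
      · rw [← hk₁, ← Category.assoc, ← Category.assoc, h1']
      · exact h2'
  have hFk : T.F k := T.fib_base_change _ _ _ _ hP2 hFmg
  -- the gap map of the composite
  have hmcomm : gA ≫ u = (f ≫ g).fX ≫ gZ := by
    apply hPZ.hom_ext
    · simp only [Category.assoc, hu₁', hgZ₁, reassoc_of% hgA₁, glue_comp_fc, glue_comp_fX,
        Φ.map_comp, reassoc_of% f.wc, g.wc]
    · simp only [Category.assoc, hu₂', hgZ₂, reassoc_of% hgA₂, glue_comp_fd, glue_comp_fX,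
        reassoc_of% f.wd, g.wd]
  set m : A.X ⟶ Q := hQ.lift gA (f ≫ g).fX hmcomm with hmdef
  have hm₁ : m ≫ q₁ = gA := hQ.lift_fst _ _ _
  have hm₂ : m ≫ q₂ = (f ≫ g).fX := hQ.lift_snd _ _ _
  have hmeq : m = mf ≫ k := by
    apply hQ.hom_ext
    · simp only [Category.assoc, hm₁, hk₁, hmf₁]
    · simp only [Category.assoc, hm₂]
      rw [← htQ₂, ← Category.assoc, ← Category.assoc]
      rw [Category.assoc mf k tQ, hk₂]
      simp only [Category.assoc, hmg₂, glue_comp_fX]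
      rw [← Category.assoc, hmf₂]
  have hFm : T.F m := by rw [hmeq]; exact T.f_comp _ _ hFmf hFk
  exact glueFib_intro S T Φ (f ≫ g) (S.f_comp _ _ hf.1 hg.1) (T.f_comp _ _ hf.2.1 hg.2.1)
    hPA hPZ hgZ₁ hgZ₂ hu₁' hu₂' hQ hm₂ (by rw [reassoc_of% hm₁, hgA₁]) (by rw [reassoc_of% hm₁, hgA₂]) hFm

end GlueBasics

section GlueTerm

/-- The terminal object of the glued category. -/
@[reducible] def glueTerm (hterm : T.W (T.isTerm.from (Φ.obj S.term))) : GlueObj S T Φ where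
  c := S.term
  d := T.term
  X := Φ.obj S.term
  p := 𝟙 _
  q := T.isTerm.from _
  fib_p := T.f_iso _ inferInstance
  w_p := T.w_iso _ inferInstance
  fib_q := T.fib_to_term _
  w_q := hterm
  gap := by
    intro P pr₁ pr₂ hP g hg₁ hg₂
    set k : Φ.obj S.term ⟶ P := hP.lift (𝟙 _) (T.isTerm.from _) (T.isTerm.hom_ext _ _)
      with hkdef
    have hk₁ : k ≫ pr₁ = 𝟙 _ := hP.lift_fst _ _ _
    have hk₂ : k ≫ pr₂ = T.isTerm.from _ := hP.lift_snd _ _ _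
    have hpk : pr₁ ≫ k = 𝟙 P := by
      apply hP.hom_ext
      · simp only [Category.assoc, hk₁, Category.comp_id, Category.id_comp]
      · exact T.isTerm.hom_ext _ _
    have hgk : g = k := by
      rw [← Category.comp_id g, ← hpk, ← Category.assoc, hg₁, Category.id_comp]
    rw [hgk]
    exact T.f_iso _ ⟨pr₁, hk₁, hpk⟩

variable (hterm : T.W (T.isTerm.from (Φ.obj S.term)))

noncomputable def glueTerm_isTerminal : IsTerminal (glueTerm S T Φ hterm) := by
  refine IsTerminal.ofUniqueHom (fun A => ⟨S.isTerm.from A.c, T.isTerm.from A.d,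
    A.p ≫ Φ.map (S.isTerm.from A.c), (Category.comp_id _).symm, T.isTerm.hom_ext _ _⟩) ?_
  intro A m
  refine glue_hom_ext S T Φ (S.isTerm.hom_ext _ _) (T.isTerm.hom_ext _ _) ?_
  show m.fX = A.p ≫ Φ.map (S.isTerm.from A.c)
  have h1 : m.fc = S.isTerm.from A.c := S.isTerm.hom_ext _ _
  rw [← h1, m.wc]
  exact (Category.comp_id m.fX).symm

lemma glue_to_term_comps {A : GlueObj S T Φ} (h : A ⟶ glueTerm S T Φ hterm) :
    h.fc = S.isTerm.from A.c ∧ h.fd = T.isTerm.from A.d ∧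
    h.fX = A.p ≫ Φ.map h.fc :=
  ⟨S.isTerm.hom_ext _ _, T.isTerm.hom_ext _ _,
    (Category.comp_id h.fX).symm.trans h.wc.symm⟩

lemma glueFib_to_term {A : GlueObj S T Φ} (h : A ⟶ glueTerm S T Φ hterm) :
    GlueFib S T Φ h := by
  obtain ⟨hc, hd, hX⟩ := glue_to_term_comps S T Φ hterm h
  obtain ⟨PA, a₁, a₂, hPA⟩ :=
    T.pb_exists (T.isTerm.from (Φ.obj A.c)) (T.isTerm.from A.d) (T.fib_to_term _)
  obtain ⟨PB, b₁, b₂, hPB⟩ :=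
    T.pb_exists (T.isTerm.from (Φ.obj S.term)) (T.isTerm.from T.term) (T.fib_to_term _)
  set gA : A.X ⟶ PA := hPA.lift A.p A.q (T.isTerm.hom_ext _ _) with hgAdef
  have hgA₁ : gA ≫ a₁ = A.p := hPA.lift_fst _ _ _
  have hgA₂ : gA ≫ a₂ = A.q := hPA.lift_snd _ _ _
  have hFgA : T.F gA := A.gap a₁ a₂ hPA gA hgA₁ hgA₂
  set gB : Φ.obj S.term ⟶ PB := hPB.lift (𝟙 _) (T.isTerm.from _) (T.isTerm.hom_ext _ _)
    with hgBdef
  have hgB₁ : gB ≫ b₁ = 𝟙 _ := hPB.lift_fst _ _ _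
  have hgB₂ : gB ≫ b₂ = T.isTerm.from _ := hPB.lift_snd _ _ _
  have hbg : b₁ ≫ gB = 𝟙 PB := by
    apply hPB.hom_ext
    · simp only [Category.assoc, hgB₁, Category.comp_id, Category.id_comp]
    · exact T.isTerm.hom_ext _ _
  have hFgB' : T.F gB := T.f_iso _ ⟨b₁, hgB₁, hbg⟩
  have hFgB : T.F gB := T.f_iso _ ⟨b₁, hgB₁, hbg⟩
  set u : PA ⟶ PB := hPB.lift (a₁ ≫ Φ.map h.fc) (a₂ ≫ h.fd) (T.isTerm.hom_ext _ _) with hudef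
  have hu₁ : u ≫ b₁ = a₁ ≫ Φ.map h.fc := hPB.lift_fst _ _ _
  have hu₂ : u ≫ b₂ = a₂ ≫ h.fd := hPB.lift_snd _ _ _
  obtain ⟨Q, q₁, q₂, hQ⟩ := T.pb_exists u gB hFgB
  have hmcomm : gA ≫ u = h.fX ≫ gB := by
    apply hPB.hom_ext
    · simp only [Category.assoc, hu₁, reassoc_of% hgA₁, hgB₁, Category.comp_id, hX]
    · exact T.isTerm.hom_ext _ _
  set m : A.X ⟶ Q := hQ.lift gA h.fX hmcomm with hmdef
  have hm₁ : m ≫ q₁ = gA := hQ.lift_fst _ _ _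
  have hm₂ : m ≫ q₂ = h.fX := hQ.lift_snd _ _ _
  set ell : PA ⟶ Q := hQ.lift (𝟙 PA) (u ≫ b₁) (by
    simp only [Category.assoc, Category.id_comp, hbg, Category.comp_id]) with helldef
  have hell₁ : ell ≫ q₁ = 𝟙 PA := hQ.lift_fst _ _ _
  have hell₂ : ell ≫ q₂ = u ≫ b₁ := hQ.lift_snd _ _ _
  have hqell : q₁ ≫ ell = 𝟙 Q := by
    apply hQ.hom_ext
    · simp only [Category.assoc, hell₁, Category.comp_id, Category.id_comp]
    · simp only [Category.assoc, hell₂, Category.id_comp]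
      rw [reassoc_of% hQ.w, hgB₁, Category.comp_id]
  have hmeq : m = gA ≫ ell := by
    apply hQ.hom_ext
    · simp only [Category.assoc, hm₁, hell₁, Category.comp_id]
    · simp only [Category.assoc, hm₂, hell₂]
      rw [reassoc_of% hmcomm, hgB₁, Category.comp_id]
      
  have hFm : T.F m := by
    rw [hmeq]
    exact T.f_comp _ _ hFgA (T.f_iso _ ⟨q₁, hell₁, hqell⟩)
  exact glueFib_intro S T Φ h (by rw [hc]; exact S.fib_to_term _)
    (by rw [hd]; exact T.fib_to_term _) hPA hPB hgB₁ hgB₂ hu₁ hu₂ hQ hm₂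
    (by rw [reassoc_of% hm₁, hgA₁]) (by rw [reassoc_of% hm₁, hgA₂]) hFm

end GlueTerm

section GluePB

set_option maxHeartbeats 1600000 in
/-- Pullbacks along fibrations exist in the glued category, are componentwise, and
the first projection is again a fibration (a trivial fibration if `p` was one). -/
lemma glue_pb
    (hw : ∀ {x y : C} (f : x ⟶ y), S.W f → T.W (Φ.map f))
    (hpb : ∀ {p x y z : C} (fst : p ⟶ x) (snd : p ⟶ y) (f : x ⟶ z) (g : y ⟶ z),
      S.F g → IsPullback fst snd f g →
        IsPullback (Φ.map fst) (Φ.map snd) (Φ.map f) (Φ.map g) ∧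
        IsHomotopyPB T (Φ.map fst) (Φ.map snd) (Φ.map f) (Φ.map g))
    {A Z Y : GlueObj S T Φ} (f : A ⟶ Z) (p : Y ⟶ Z) (hp : GlueFib S T Φ p) :
    ∃ (Wo : GlueObj S T Φ) (fst : Wo ⟶ A) (snd : Wo ⟶ Y),
      IsPullback fst snd f p ∧ IsPullback fst.fc snd.fc f.fc p.fc ∧
      IsPullback fst.fd snd.fd f.fd p.fd ∧ IsPullback fst.fX snd.fX f.fX p.fX ∧
      GlueFib S T Φ fst ∧ (GlueW S T Φ p → GlueW S T Φ fst) := by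
  -- Stage 1: base pullbacks and matching objects
  obtain ⟨cW, fc₁, fc₂, hcW⟩ := S.pb_exists f.fc p.fc hp.1
  obtain ⟨dW, fd₁, fd₂, hdW⟩ := T.pb_exists f.fd p.fd hp.2.1
  obtain ⟨PA, a₁, a₂, hPA⟩ :=
    T.pb_exists (T.isTerm.from (Φ.obj A.c)) (T.isTerm.from A.d) (T.fib_to_term _)
  obtain ⟨PY, y₁, y₂, hPY⟩ :=
    T.pb_exists (T.isTerm.from (Φ.obj Y.c)) (T.isTerm.from Y.d) (T.fib_to_term _)
  obtain ⟨PZ, z₁, z₂, hPZ⟩ :=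
    T.pb_exists (T.isTerm.from (Φ.obj Z.c)) (T.isTerm.from Z.d) (T.fib_to_term _)
  obtain ⟨PW, w₁, w₂, hPW⟩ :=
    T.pb_exists (T.isTerm.from (Φ.obj cW)) (T.isTerm.from dW) (T.fib_to_term _)
  set gA : A.X ⟶ PA := hPA.lift A.p A.q (T.isTerm.hom_ext _ _) with hgAdef
  have hgA₁ : gA ≫ a₁ = A.p := hPA.lift_fst _ _ _
  have hgA₂ : gA ≫ a₂ = A.q := hPA.lift_snd _ _ _
  have hFgA : T.F gA := A.gap a₁ a₂ hPA gA hgA₁ hgA₂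
  set gY : Y.X ⟶ PY := hPY.lift Y.p Y.q (T.isTerm.hom_ext _ _) with hgYdef
  have hgY₁ : gY ≫ y₁ = Y.p := hPY.lift_fst _ _ _
  have hgY₂ : gY ≫ y₂ = Y.q := hPY.lift_snd _ _ _
  set gZ : Z.X ⟶ PZ := hPZ.lift Z.p Z.q (T.isTerm.hom_ext _ _) with hgZdef
  have hgZ₁ : gZ ≫ z₁ = Z.p := hPZ.lift_fst _ _ _
  have hgZ₂ : gZ ≫ z₂ = Z.q := hPZ.lift_snd _ _ _
  have hFgZ : T.F gZ := Z.gap z₁ z₂ hPZ gZ hgZ₁ hgZ₂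
  set uAZ : PA ⟶ PZ := hPZ.lift (a₁ ≫ Φ.map f.fc) (a₂ ≫ f.fd) (T.isTerm.hom_ext _ _)
    with huAZdef
  have huAZ₁ : uAZ ≫ z₁ = a₁ ≫ Φ.map f.fc := hPZ.lift_fst _ _ _
  have huAZ₂ : uAZ ≫ z₂ = a₂ ≫ f.fd := hPZ.lift_snd _ _ _
  set uYZ : PY ⟶ PZ := hPZ.lift (y₁ ≫ Φ.map p.fc) (y₂ ≫ p.fd) (T.isTerm.hom_ext _ _)
    with huYZdef
  have huYZ₁ : uYZ ≫ z₁ = y₁ ≫ Φ.map p.fc := hPZ.lift_fst _ _ _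
  have huYZ₂ : uYZ ≫ z₂ = y₂ ≫ p.fd := hPZ.lift_snd _ _ _
  have hgAu : gA ≫ uAZ = f.fX ≫ gZ := by
    apply hPZ.hom_ext
    · simp only [Category.assoc, huAZ₁, hgZ₁, reassoc_of% hgA₁, f.wc]
    · simp only [Category.assoc, huAZ₂, hgZ₂, reassoc_of% hgA₂, f.wd]
  have hgYu : gY ≫ uYZ = p.fX ≫ gZ := by
    apply hPZ.hom_ext
    · simp only [Category.assoc, huYZ₁, hgZ₁, reassoc_of% hgY₁, p.wc]
    · simp only [Category.assoc, huYZ₂, hgZ₂, reassoc_of% hgY₂, p.wd]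
  obtain ⟨Q, qP, qX, hQ⟩ := T.pb_exists uYZ gZ hFgZ
  set mp : Y.X ⟶ Q := hQ.lift gY p.fX hgYu with hmpdef
  have hmp₁ : mp ≫ qP = gY := hQ.lift_fst _ _ _
  have hmp₂ : mp ≫ qX = p.fX := hQ.lift_snd _ _ _
  have hFmp : T.F mp := hp.2.2 y₁ y₂ hPY z₁ z₂ hPZ gZ hgZ₁ hgZ₂ uYZ huYZ₁ huYZ₂ qP qX hQ mp
    hmp₂ (by rw [reassoc_of% hmp₁, hgY₁]) (by rw [reassoc_of% hmp₁, hgY₂])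
  obtain ⟨hΦpb, hHtpy⟩ := hpb fc₁ fc₂ f.fc p.fc hp.1 hcW
  obtain ⟨c'', j, q'', hWj, hFq'', hjq, P'', π₁'', π₂'', hP'', m'', hWm'', hm''₁, hm''₂⟩ := hHtpy
  set πA : PW ⟶ PA := hPA.lift (w₁ ≫ Φ.map fc₁) (w₂ ≫ fd₁) (T.isTerm.hom_ext _ _) with hπAdef
  have hπA₁ : πA ≫ a₁ = w₁ ≫ Φ.map fc₁ := hPA.lift_fst _ _ _
  have hπA₂ : πA ≫ a₂ = w₂ ≫ fd₁ := hPA.lift_snd _ _ _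
  set πY : PW ⟶ PY := hPY.lift (w₁ ≫ Φ.map fc₂) (w₂ ≫ fd₂) (T.isTerm.hom_ext _ _) with hπYdef
  have hπY₁ : πY ≫ y₁ = w₁ ≫ Φ.map fc₂ := hPY.lift_fst _ _ _
  have hπY₂ : πY ≫ y₂ = w₂ ≫ fd₂ := hPY.lift_snd _ _ _
  have hPWpb : IsPullback πA πY uAZ uYZ := by
    refine mk_pb ?_ (fun {V} a b h => hPW.lift
      (hΦpb.lift (a ≫ a₁) (b ≫ y₁) ?_) (hdW.lift (a ≫ a₂) (b ≫ y₂) ?_)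
      (T.isTerm.hom_ext _ _)) ?_ ?_ ?_
    · apply hPZ.hom_ext
      · simp only [Category.assoc, huAZ₁, huYZ₁, reassoc_of% hπA₁, reassoc_of% hπY₁,
          ← Functor.map_comp, hcW.w]
      · simp only [Category.assoc, huAZ₂, huYZ₂, reassoc_of% hπA₂, reassoc_of% hπY₂, hdW.w]
    · have h₁ := congrArg (· ≫ z₁) h
      simpa only [Category.assoc, huAZ₁, huYZ₁] using h₁
    · have h₂ := congrArg (· ≫ z₂) h
      simpa only [Category.assoc, huAZ₂, huYZ₂] using h₂
    · intro V a b h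
      apply hPA.hom_ext
      · simp only [Category.assoc, hπA₁]
        rw [reassoc_of% (hPW.lift_fst _ _ _), hΦpb.lift_fst]
      · simp only [Category.assoc, hπA₂]
        rw [reassoc_of% (hPW.lift_snd _ _ _), hdW.lift_fst]
    · intro V a b h
      apply hPY.hom_ext
      · simp only [Category.assoc, hπY₁]
        rw [reassoc_of% (hPW.lift_fst _ _ _), hΦpb.lift_snd]
      · simp only [Category.assoc, hπY₂]
        rw [reassoc_of% (hPW.lift_snd _ _ _), hdW.lift_snd]
    · intro V m m' h1 h2
      apply hPW.hom_ext
      · apply hΦpb.hom_ext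
        · simp only [Category.assoc]
          rw [← hπA₁]
          simp only [← Category.assoc]
          rw [h1]
        · simp only [Category.assoc]
          rw [← hπY₁]
          simp only [← Category.assoc]
          rw [h2]
      · apply hdW.hom_ext
        · simp only [Category.assoc]
          rw [← hπA₂]
          simp only [← Category.assoc]
          rw [h1]
        · simp only [Category.assoc]
          rw [← hπY₂]
          simp only [← Category.assoc]
          rw [h2]
  obtain ⟨R, rP, rX, hR⟩ := T.pb_exists πA gA hFgA
  have hFrP : T.F rP := T.fib_base_change _ _ _ _ hR hFgA
  set t : R ⟶ Q := hQ.lift (rP ≫ πY) (rX ≫ f.fX) (by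
    simp only [Category.assoc, ← hPWpb.w]
    rw [reassoc_of% hR.w, hgAu]) with htdef
  have ht₁ : t ≫ qP = rP ≫ πY := hQ.lift_fst _ _ _
  have ht₂ : t ≫ qX = rX ≫ f.fX := hQ.lift_snd _ _ _
  obtain ⟨XW, σR, σY, hXW⟩ := T.pb_exists t mp hFmp
  have hFσR : T.F σR := T.fib_base_change _ _ _ _ hXW hFmp
  set pW : XW ⟶ Φ.obj cW := σR ≫ rP ≫ w₁ with hpWdef
  set qW : XW ⟶ dW := σR ≫ rP ≫ w₂ with hqWdef
  have hFw₁ : T.F w₁ := T.fib_base_change _ _ _ _ hPW (T.fib_to_term _)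
  have hFw₂ : T.F w₂ := T.fib_base_change _ _ _ _ hPW.flip (T.fib_to_term _)
  have hFpW : T.F pW := T.f_comp _ _ hFσR (T.f_comp _ _ hFrP hFw₁)
  have hFqW : T.F qW := T.f_comp _ _ hFσR (T.f_comp _ _ hFrP hFw₂)
  have hkeyA : σR ≫ rP ≫ w₁ ≫ Φ.map fc₁ = σR ≫ rX ≫ A.p := by
    rw [← hπA₁, reassoc_of% hR.w, hgA₁]
  have hkeyB : σR ≫ rP ≫ w₁ ≫ Φ.map fc₂ = σY ≫ Y.p := by
    rw [← hπY₁, ← reassoc_of% ht₁, reassoc_of% hXW.w, reassoc_of% hmp₁, hgY₁]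
  have hkeyC : σR ≫ rP ≫ w₂ ≫ fd₁ = σR ≫ rX ≫ A.q := by
    rw [← hπA₂, reassoc_of% hR.w, hgA₂]
  have hkeyD : σR ≫ rP ≫ w₂ ≫ fd₂ = σY ≫ Y.q := by
    rw [← hπY₂, ← reassoc_of% ht₁, reassoc_of% hXW.w, reassoc_of% hmp₁, hgY₂]
  -- Stage 2: the corrected world
  obtain ⟨PtY, ty₁, ty₂, hPtY⟩ :=
    T.pb_exists (T.isTerm.from c'') (T.isTerm.from Y.d) (T.fib_to_term _)
  set lam : PY ⟶ PtY := hPtY.lift (y₁ ≫ j) y₂ (T.isTerm.hom_ext _ _) with hlamdef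
  have hlam₁ : lam ≫ ty₁ = y₁ ≫ j := hPtY.lift_fst _ _ _
  have hlam₂ : lam ≫ ty₂ = y₂ := hPtY.lift_snd _ _ _
  have hWlam : T.W lam := prodmap_fst_we T hPY hPtY hlam₁ hlam₂ hWj
  set ut : PtY ⟶ PZ := hPZ.lift (ty₁ ≫ q'') (ty₂ ≫ p.fd) (T.isTerm.hom_ext _ _) with hutdef
  have hut₁ : ut ≫ z₁ = ty₁ ≫ q'' := hPZ.lift_fst _ _ _
  have hut₂ : ut ≫ z₂ = ty₂ ≫ p.fd := hPZ.lift_snd _ _ _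
  have hlamu : lam ≫ ut = uYZ := by
    apply hPZ.hom_ext
    · simp only [Category.assoc, hut₁, huYZ₁, reassoc_of% hlam₁, hjq]
    · simp only [Category.assoc, hut₂, huYZ₂, reassoc_of% hlam₂]
  obtain ⟨K, k₁, k₂, hK⟩ :=
    T.pb_exists (T.isTerm.from (Φ.obj Z.c)) (T.isTerm.from Y.d) (T.fib_to_term _)
  set s₁ : PtY ⟶ K := hK.lift (ty₁ ≫ q'') ty₂ (T.isTerm.hom_ext _ _) with hs₁def
  have hs₁₁ : s₁ ≫ k₁ = ty₁ ≫ q'' := hK.lift_fst _ _ _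
  have hs₁₂ : s₁ ≫ k₂ = ty₂ := hK.lift_snd _ _ _
  have hs₁pb : IsPullback s₁ ty₁ k₁ q'' := prodmap_fst T hPtY hK q'' hs₁₁ hs₁₂
  have hFs₁ : T.F s₁ := T.fib_base_change _ _ _ _ hs₁pb hFq''
  set s₂ : K ⟶ PZ := hPZ.lift k₁ (k₂ ≫ p.fd) (T.isTerm.hom_ext _ _) with hs₂def
  have hs₂₁ : s₂ ≫ z₁ = k₁ := hPZ.lift_fst _ _ _
  have hs₂₂ : s₂ ≫ z₂ = k₂ ≫ p.fd := hPZ.lift_snd _ _ _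
  have hs₂pb : IsPullback s₂ k₂ z₂ p.fd := prodmap_snd T hK hPZ p.fd hs₂₁ hs₂₂
  have hFs₂ : T.F s₂ := T.fib_base_change _ _ _ _ hs₂pb hp.2.1
  have huteq : ut = s₁ ≫ s₂ := by
    apply hPZ.hom_ext
    · simp only [Category.assoc, hut₁, hs₂₁, hs₁₁]
    · simp only [Category.assoc, hut₂, hs₂₂, reassoc_of% hs₁₂]
  have hFut : T.F ut := by rw [huteq]; exact T.f_comp _ _ hFs₁ hFs₂
  obtain ⟨Qt, tqP, tqX, hQt⟩ := T.pb_exists ut gZ hFgZ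
  have hFtqP : T.F tqP := T.fib_base_change _ _ _ _ hQt hFgZ
  set kap : Q ⟶ Qt := hQt.lift (qP ≫ lam) qX (by
    simp only [Category.assoc, hlamu, hQ.w]) with hkapdef
  have hkap₁ : kap ≫ tqP = qP ≫ lam := hQt.lift_fst _ _ _
  have hkap₂ : kap ≫ tqX = qX := hQt.lift_snd _ _ _
  have hkappb : IsPullback qP kap lam tqP := by
    refine mk_pb hkap₁.symm (fun {V} a b h => hQ.lift a (b ≫ tqX) ?_) ?_ ?_ ?_
    · rw [← hlamu, ← Category.assoc, h]
      simp only [Category.assoc, hQt.w]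
    · intro V a b h; exact hQ.lift_fst _ _ _
    · intro V a b h
      apply hQt.hom_ext
      · simp only [Category.assoc, hkap₁]
        rw [← Category.assoc, hQ.lift_fst, h]
      · simp only [Category.assoc, hkap₂, hQ.lift_snd]
    · intro V m m' h1 h2
      apply hQ.hom_ext
      · exact h1
      · rw [← hkap₂, ← Category.assoc, ← Category.assoc, h2]
  have hWkap : T.W kap := fib_proper T hkappb hWlam hFtqP
  obtain ⟨XtY, ι, τι, mt, hιτ, hFτι, hWτι, hWι, hFmt, hιmt, -⟩ := fib_brown T (mp ≫ kap)
  set ftX : XtY ⟶ Z.X := mt ≫ tqX with hftXdef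
  set gtc : XtY ⟶ c'' := mt ≫ tqP ≫ ty₁ with hgtcdef
  set gtd : XtY ⟶ Y.d := mt ≫ tqP ≫ ty₂ with hgtddef
  have hιf : ι ≫ ftX = p.fX := by
    rw [hftXdef, ← Category.assoc, hιmt]
    simp only [Category.assoc, hkap₂, hmp₂]
  have hιc : ι ≫ gtc = Y.p ≫ j := by
    rw [hgtcdef, ← Category.assoc, hιmt]
    simp only [Category.assoc, reassoc_of% hkap₁, reassoc_of% hmp₁, hlam₁, reassoc_of% hgY₁]
  have hιd : ι ≫ gtd = Y.q := by
    rw [hgtddef, ← Category.assoc, hιmt]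
    simp only [Category.assoc, reassoc_of% hkap₁, reassoc_of% hmp₁, hlam₂, hgY₂]
  have hWgtc : T.W gtc :=
    T.w_two_three_left ι gtc hWι (by rw [hιc]; exact T.w_comp _ _ Y.w_p hWj)
  have hWgtd : T.W gtd :=
    T.w_two_three_left ι gtd hWι (by rw [hιd]; exact Y.w_q)
  obtain ⟨Yh, yhQ, yhX, hYh⟩ := T.pb_exists kap mt hFmt
  have hFyhQ : T.F yhQ := T.fib_base_change _ _ _ _ hYh hFmt
  have hWyhX : T.W yhX := fib_proper T hYh hWkap hFmt
  set ιh : Y.X ⟶ Yh := hYh.lift mp ι hιmt.symm with hιhdef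
  have hιh₁ : ιh ≫ yhQ = mp := hYh.lift_fst _ _ _
  have hιh₂ : ιh ≫ yhX = ι := hYh.lift_snd _ _ _
  have hWιh : T.W ιh := T.w_two_three_right ιh yhX hWyhX (by rw [hιh₂]; exact hWι)
  obtain ⟨G, gR, gX, hG⟩ := T.pb_exists (t ≫ kap) mt hFmt
  set Θ : XW ⟶ G := hG.lift σR (σY ≫ ι) (by
    rw [← Category.assoc, hXW.w]
    simp only [Category.assoc, hιmt]) with hΘdef
  have hΘ₁ : Θ ≫ gR = σR := hG.lift_fst _ _ _
  have hΘ₂ : Θ ≫ gX = σY ≫ ι := hG.lift_snd _ _ _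
  set gh : G ⟶ Yh := hYh.lift (gR ≫ t) gX (by simp only [Category.assoc, hG.w]) with hghdef
  have hgh₁ : gh ≫ yhQ = gR ≫ t := hYh.lift_fst _ _ _
  have hgh₂ : gh ≫ yhX = gX := hYh.lift_snd _ _ _
  have hG' : IsPullback gR gh t yhQ := by
    refine mk_pb hgh₁.symm (fun {V} a b h => hG.lift a (b ≫ yhX) ?_) ?_ ?_ ?_
    · rw [← Category.assoc, h]
      simp only [Category.assoc, hYh.w]
    · intro V a b h; exact hG.lift_fst _ _ _
    · intro V a b h
      apply hYh.hom_ext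
      · simp only [Category.assoc, hgh₁]
        rw [← Category.assoc, hG.lift_fst, h]
      · simp only [Category.assoc, hgh₂, hG.lift_snd]
    · intro V m m' h1 h2
      apply hG.hom_ext
      · exact h1
      · rw [← hgh₂, ← Category.assoc, ← Category.assoc, h2]
  have hΘgh : Θ ≫ gh = σY ≫ ιh := by
    apply hYh.hom_ext
    · simp only [Category.assoc, hgh₁, hιh₁]
      rw [reassoc_of% hΘ₁, hXW.w]
    · simp only [Category.assoc, hgh₂, hιh₂, hΘ₂]
  have hWΘ : T.W Θ := fib_glue_base T hFmp hFyhQ hιh₁ hWιh hXW hG' hΘ₁ hΘgh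
  obtain ⟨PtW, tw₁, tw₂, hPtW⟩ :=
    T.pb_exists (T.isTerm.from P'') (T.isTerm.from dW) (T.fib_to_term _)
  set πtA : PtW ⟶ PA := hPA.lift (tw₁ ≫ π₁'') (tw₂ ≫ fd₁) (T.isTerm.hom_ext _ _) with hπtAdef
  have hπtA₁ : πtA ≫ a₁ = tw₁ ≫ π₁'' := hPA.lift_fst _ _ _
  have hπtA₂ : πtA ≫ a₂ = tw₂ ≫ fd₁ := hPA.lift_snd _ _ _
  set πtY : PtW ⟶ PtY := hPtY.lift (tw₁ ≫ π₂'') (tw₂ ≫ fd₂) (T.isTerm.hom_ext _ _)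
    with hπtYdef
  have hπtY₁ : πtY ≫ ty₁ = tw₁ ≫ π₂'' := hPtY.lift_fst _ _ _
  have hπtY₂ : πtY ≫ ty₂ = tw₂ ≫ fd₂ := hPtY.lift_snd _ _ _
  have hPtWpb : IsPullback πtA πtY uAZ ut := by
    refine mk_pb ?_ (fun {V} a b h => hPtW.lift
      (hP''.lift (a ≫ a₁) (b ≫ ty₁) ?_) (hdW.lift (a ≫ a₂) (b ≫ ty₂) ?_)
      (T.isTerm.hom_ext _ _)) ?_ ?_ ?_
    · apply hPZ.hom_ext
      · simp only [Category.assoc, huAZ₁, hut₁, reassoc_of% hπtA₁, reassoc_of% hπtY₁, hP''.w]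
      · simp only [Category.assoc, huAZ₂, hut₂, reassoc_of% hπtA₂, reassoc_of% hπtY₂, hdW.w]
    · have h₁ := congrArg (· ≫ z₁) h
      simpa only [Category.assoc, huAZ₁, hut₁] using h₁
    · have h₂ := congrArg (· ≫ z₂) h
      simpa only [Category.assoc, huAZ₂, hut₂] using h₂
    · intro V a b h
      apply hPA.hom_ext
      · simp only [Category.assoc, hπtA₁]
        rw [reassoc_of% (hPtW.lift_fst _ _ _), hP''.lift_fst]
      · simp only [Category.assoc, hπtA₂]
        rw [reassoc_of% (hPtW.lift_snd _ _ _), hdW.lift_fst]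
    · intro V a b h
      apply hPtY.hom_ext
      · simp only [Category.assoc, hπtY₁]
        rw [reassoc_of% (hPtW.lift_fst _ _ _), hP''.lift_snd]
      · simp only [Category.assoc, hπtY₂]
        rw [reassoc_of% (hPtW.lift_snd _ _ _), hdW.lift_snd]
    · intro V m m' h1 h2
      apply hPtW.hom_ext
      · apply hP''.hom_ext
        · simp only [Category.assoc]
          rw [← hπtA₁]
          simp only [← Category.assoc]
          rw [h1]
        · simp only [Category.assoc]
          rw [← hπtY₁]
          simp only [← Category.assoc]
          rw [h2]
      · apply hdW.hom_ext
        · simp only [Category.assoc]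
          rw [← hπtA₂]
          simp only [← Category.assoc]
          rw [h1]
        · simp only [Category.assoc]
          rw [← hπtY₂]
          simp only [← Category.assoc]
          rw [h2]
  set nu : PW ⟶ PtW := hPtW.lift (w₁ ≫ m'') w₂ (T.isTerm.hom_ext _ _) with hnudef
  have hnu₁ : nu ≫ tw₁ = w₁ ≫ m'' := hPtW.lift_fst _ _ _
  have hnu₂ : nu ≫ tw₂ = w₂ := hPtW.lift_snd _ _ _
  have hWnu : T.W nu := prodmap_fst_we T hPW hPtW hnu₁ hnu₂ hWm''
  have hnuπA : nu ≫ πtA = πA := by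
    apply hPA.hom_ext
    · simp only [Category.assoc, hπtA₁, hπA₁, reassoc_of% hnu₁, hm''₁]
    · simp only [Category.assoc, hπtA₂, hπA₂, reassoc_of% hnu₂]
  have hnuπY : nu ≫ πtY = πY ≫ lam := by
    apply hPtY.hom_ext
    · simp only [Category.assoc, hπtY₁, hlam₁, reassoc_of% hnu₁, hm''₂, reassoc_of% hπY₁]
    · simp only [Category.assoc, hπtY₂, hlam₂, reassoc_of% hnu₂, hπY₂]
  obtain ⟨Rt, rtP, rtX, hRt⟩ := T.pb_exists πtA gA hFgA
  have hFrtP : T.F rtP := T.fib_base_change _ _ _ _ hRt hFgA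
  set mu : R ⟶ Rt := hRt.lift (rP ≫ nu) rX (by
    simp only [Category.assoc, hnuπA, hR.w]) with hmudef
  have hmu₁ : mu ≫ rtP = rP ≫ nu := hRt.lift_fst _ _ _
  have hmu₂ : mu ≫ rtX = rX := hRt.lift_snd _ _ _
  have hmupb : IsPullback rP mu nu rtP := by
    refine mk_pb hmu₁.symm (fun {V} a b h => hR.lift a (b ≫ rtX) ?_) ?_ ?_ ?_
    · rw [← hnuπA, ← Category.assoc, h]
      simp only [Category.assoc, hRt.w]
    · intro V a b h; exact hR.lift_fst _ _ _
    · intro V a b h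
      apply hRt.hom_ext
      · simp only [Category.assoc, hmu₁]
        rw [← Category.assoc, hR.lift_fst, h]
      · simp only [Category.assoc, hmu₂, hR.lift_snd]
    · intro V m m' h1 h2
      apply hR.hom_ext
      · exact h1
      · rw [← hmu₂, ← Category.assoc, ← Category.assoc, h2]
  have hWmu : T.W mu := fib_proper T hmupb hWnu hFrtP
  set tt' : Rt ⟶ Qt := hQt.lift (rtP ≫ πtY) (rtX ≫ f.fX) (by
    simp only [Category.assoc, ← hPtWpb.w]
    rw [reassoc_of% hRt.w, hgAu]) with htt'def
  have htt'₁ : tt' ≫ tqP = rtP ≫ πtY := hQt.lift_fst _ _ _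
  have htt'₂ : tt' ≫ tqX = rtX ≫ f.fX := hQt.lift_snd _ _ _
  have hmut : mu ≫ tt' = t ≫ kap := by
    apply hQt.hom_ext
    · simp only [Category.assoc, htt'₁, hkap₁, reassoc_of% hmu₁, hnuπY, reassoc_of% ht₁]
    · simp only [Category.assoc, htt'₂, hkap₂, reassoc_of% hmu₂, ht₂]
  obtain ⟨XtW, stR, stX, hXtW⟩ := T.pb_exists tt' mt hFmt
  have hFstR : T.F stR := T.fib_base_change _ _ _ _ hXtW hFmt
  set Θt : G ⟶ XtW := hXtW.lift (gR ≫ mu) gX (by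
    simp only [Category.assoc, hmut, hG.w]) with hΘtdef
  have hΘt₁ : Θt ≫ stR = gR ≫ mu := hXtW.lift_fst _ _ _
  have hΘt₂ : Θt ≫ stX = gX := hXtW.lift_snd _ _ _
  have hΘtpb : IsPullback gR Θt mu stR := by
    refine mk_pb hΘt₁.symm (fun {V} a b h => hG.lift a (b ≫ stX) ?_) ?_ ?_ ?_
    · rw [← hmut, ← Category.assoc, h]
      simp only [Category.assoc, hXtW.w]
    · intro V a b h; exact hG.lift_fst _ _ _
    · intro V a b h
      apply hXtW.hom_ext
      · simp only [Category.assoc, hΘt₁]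
        rw [← Category.assoc, hG.lift_fst, h]
      · simp only [Category.assoc, hΘt₂, hG.lift_snd]
    · intro V m m' h1 h2
      apply hG.hom_ext
      · exact h1
      · rw [← hΘt₂, ← Category.assoc, ← Category.assoc, h2]
  have hWΘt : T.W Θt := fib_proper T hΘtpb hWmu hFstR
  -- Stage 3: legs of the corrected object are weak equivalences
  set htc : XtW ⟶ P'' := stR ≫ rtP ≫ tw₁ with hhtcdef
  set htd : XtW ⟶ dW := stR ≫ rtP ≫ tw₂ with hhtddef
  have hcomm3 : ftX ≫ Z.q = gtd ≫ p.fd := by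
    rw [hftXdef, hgtddef]
    simp only [Category.assoc]
    rw [← hgZ₂, ← Category.assoc tqX, ← hQt.w]
    simp only [Category.assoc, hut₂]
  have hgtcq : gtc ≫ q'' = ftX ≫ Z.p := by
    rw [hftXdef, hgtcdef]
    simp only [Category.assoc]
    rw [← hgZ₁, ← Category.assoc tqX, ← hQt.w]
    simp only [Category.assoc, hut₁]
  obtain ⟨U3, u3X, u3d, hU3⟩ := T.pb_exists Z.q p.fd hp.2.1
  obtain ⟨hFu3d, hWu3d⟩ := T.trivfib_base_change _ _ _ _ hU3.flip Z.fib_q Z.w_q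
  set dt : XtY ⟶ U3 := hU3.lift ftX gtd hcomm3 with hdtdef
  have hdt₁ : dt ≫ u3X = ftX := hU3.lift_fst _ _ _
  have hdt₂ : dt ≫ u3d = gtd := hU3.lift_snd _ _ _
  have hWdt : T.W dt := T.w_two_three_right dt u3d hWu3d (by rw [hdt₂]; exact hWgtd)
  set π3 : Qt ⟶ U3 := hU3.lift tqX (tqP ≫ ty₂) (by
    rw [← hgZ₂, ← Category.assoc tqX, ← hQt.w]
    simp only [Category.assoc, hut₂]) with hπ3def
  have hπ3₁ : π3 ≫ u3X = tqX := hU3.lift_fst _ _ _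
  have hπ3₂ : π3 ≫ u3d = tqP ≫ ty₂ := hU3.lift_snd _ _ _
  set om : U3 ⟶ K := hK.lift (u3X ≫ Z.p) u3d (T.isTerm.hom_ext _ _) with homdef
  have hom₁ : om ≫ k₁ = u3X ≫ Z.p := hK.lift_fst _ _ _
  have hom₂ : om ≫ k₂ = u3d := hK.lift_snd _ _ _
  have hπ3pb : IsPullback π3 tqP om s₁ := by
    refine mk_pb ?_ (fun {V} a b h => hQt.lift b (a ≫ u3X) ?_) ?_ ?_ ?_
    · apply hK.hom_ext
      · simp only [Category.assoc, hom₁, hs₁₁, reassoc_of% hπ3₁]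
        rw [← hgZ₁, ← Category.assoc tqX, ← hQt.w]
        simp only [Category.assoc, hut₁]
      · simp only [Category.assoc, hom₂, hs₁₂, hπ3₂]
    · apply hPZ.hom_ext
      · have h₁ := congrArg (· ≫ k₁) h
        simp only [Category.assoc, hom₁, hs₁₁] at h₁
        simp only [Category.assoc, hut₁, ← h₁, hgZ₁]
      · have h₂ := congrArg (· ≫ k₂) h
        simp only [Category.assoc, hom₂, hs₁₂] at h₂
        simp only [Category.assoc, hut₂, hgZ₂, hU3.w, reassoc_of% h₂]
    · intro V a b h
      apply hU3.hom_ext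
      · simp only [Category.assoc, hπ3₁, hQt.lift_snd]
      · simp only [Category.assoc, hπ3₂]
        rw [reassoc_of% (hQt.lift_fst b _ _)]
        have h₂ := congrArg (· ≫ k₂) h
        simpa only [Category.assoc, hom₂, hs₁₂] using h₂.symm
    · intro V a b h; exact hQt.lift_fst _ _ _
    · intro V m m' h1 h2
      apply hQt.hom_ext
      · exact h2
      · rw [← hπ3₁, ← Category.assoc, ← Category.assoc, h1]
  have hFπ3 : T.F π3 := T.fib_base_change _ _ _ _ hπ3pb hFs₁
  have hdteq : dt = mt ≫ π3 := by
    apply hU3.hom_ext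
    · simp only [Category.assoc, hdt₁, hπ3₁, hftXdef]
    · simp only [Category.assoc, hdt₂, hπ3₂, hgtddef]
  have hFdt : T.F dt := by rw [hdteq]; exact T.f_comp _ _ hFmt hFπ3
  obtain ⟨V2, vA, vd, hV2⟩ := T.pb_exists (A.q ≫ f.fd) p.fd hp.2.1
  set ξ3 : V2 ⟶ U3 := hU3.lift (vA ≫ f.fX) vd (by
    simp only [Category.assoc, ← f.wd, hV2.w]) with hξ3def
  have hξ3₁ : ξ3 ≫ u3X = vA ≫ f.fX := hU3.lift_fst _ _ _
  have hξ3₂ : ξ3 ≫ u3d = vd := hU3.lift_snd _ _ _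
  have hstf : stR ≫ rtX ≫ f.fX = stX ≫ ftX := by
    rw [hftXdef, ← Category.assoc stX, ← hXtW.w]
    simp only [Category.assoc, htt'₂]
  have hstReq : stR ≫ rtP ≫ tw₂ ≫ fd₁ = stR ≫ rtX ≫ A.q := by
    rw [← hπtA₂, reassoc_of% hRt.w, hgA₂]
  have hkeyD2t : stR ≫ rtP ≫ tw₂ ≫ fd₂ = stX ≫ gtd := by
    rw [← hπtY₂, ← reassoc_of% htt'₁, reassoc_of% hXtW.w, ← hgtddef]
  have hkeyP2t : stR ≫ rtP ≫ tw₁ ≫ π₂'' = stX ≫ gtc := by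
    rw [← hπtY₁, ← reassoc_of% htt'₁, reassoc_of% hXtW.w, ← hgtcdef]
  have hkeyP1t : stR ≫ rtP ≫ tw₁ ≫ π₁'' = stR ≫ rtX ≫ A.p := by
    rw [← hπtA₁, reassoc_of% hRt.w, hgA₁]
  have hchicomm : (stR ≫ rtX) ≫ A.q ≫ f.fd = (stX ≫ gtd) ≫ p.fd := by
    simp only [Category.assoc, ← reassoc_of% hstReq, ← reassoc_of% hkeyD2t, hdW.w]
  set chi : XtW ⟶ V2 := hV2.lift (stR ≫ rtX) (stX ≫ gtd) hchicomm with hchidef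
  have hchi₁ : chi ≫ vA = stR ≫ rtX := hV2.lift_fst _ _ _
  have hchi₂ : chi ≫ vd = stX ≫ gtd := hV2.lift_snd _ _ _
  have hchipb : IsPullback chi stX ξ3 dt := by
    refine mk_pb' ?_ ?_ ?_
    · apply hU3.hom_ext
      · simp only [Category.assoc, hξ3₁, hdt₁, reassoc_of% hchi₁]
        exact hstf
      · simp only [Category.assoc, hξ3₂, hdt₂, hchi₂]
    · intro V a b h
      have hvd2 : a ≫ vd = b ≫ gtd := by
        have h₂ := congrArg (· ≫ u3d) h
        simpa only [Category.assoc, hξ3₂, hdt₂] using h₂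
      have hfX2 : a ≫ vA ≫ f.fX = b ≫ ftX := by
        have h₁ := congrArg (· ≫ u3X) h
        simpa only [Category.assoc, hξ3₁, hdt₁] using h₁
      have hc1 : (a ≫ vA ≫ A.p) ≫ Φ.map f.fc = (b ≫ gtc) ≫ q'' := by
        simp only [Category.assoc, f.wc, hgtcq, reassoc_of% hfX2]
      have hc2 : (a ≫ vA ≫ A.q) ≫ f.fd = (b ≫ gtd) ≫ p.fd := by
        simp only [Category.assoc, hV2.w]
        rw [reassoc_of% hvd2]
      set lP : V ⟶ P'' := hP''.lift (a ≫ vA ≫ A.p) (b ≫ gtc) hc1 with hlPdef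
      have hlP₁ : lP ≫ π₁'' = a ≫ vA ≫ A.p := hP''.lift_fst _ _ _
      have hlP₂ : lP ≫ π₂'' = b ≫ gtc := hP''.lift_snd _ _ _
      set lD : V ⟶ dW := hdW.lift (a ≫ vA ≫ A.q) (b ≫ gtd) hc2 with hlDdef
      have hlD₁ : lD ≫ fd₁ = a ≫ vA ≫ A.q := hdW.lift_fst _ _ _
      have hlD₂ : lD ≫ fd₂ = b ≫ gtd := hdW.lift_snd _ _ _
      set lW : V ⟶ PtW := hPtW.lift lP lD (T.isTerm.hom_ext _ _) with hlWdef
      have hlW₁ : lW ≫ tw₁ = lP := hPtW.lift_fst _ _ _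
      have hlW₂ : lW ≫ tw₂ = lD := hPtW.lift_snd _ _ _
      have hcR : lW ≫ πtA = (a ≫ vA) ≫ gA := by
        apply hPA.hom_ext
        · simp only [Category.assoc, hπtA₁, hgA₁, reassoc_of% hlW₁, hlP₁]
        · simp only [Category.assoc, hπtA₂, hgA₂, reassoc_of% hlW₂, hlD₁]
      set lR : V ⟶ Rt := hRt.lift lW (a ≫ vA) hcR with hlRdef
      have hlR₁ : lR ≫ rtP = lW := hRt.lift_fst _ _ _
      have hlR₂ : lR ≫ rtX = a ≫ vA := hRt.lift_snd _ _ _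
      have hcX : lR ≫ tt' = b ≫ mt := by
        apply hQt.hom_ext
        · simp only [Category.assoc, htt'₁]
          rw [reassoc_of% hlR₁]
          apply hPtY.hom_ext
          · simp only [Category.assoc, hπtY₁, reassoc_of% hlW₁, hlP₂, ← hgtcdef]
          · simp only [Category.assoc, hπtY₂, reassoc_of% hlW₂, hlD₂, ← hgtddef]
        · simp only [Category.assoc, htt'₂, reassoc_of% hlR₂, hfX2, reassoc_of% hfX2, ← hftXdef]
      refine ⟨hXtW.lift lR b hcX, ?_, ?_⟩
      · apply hV2.hom_ext
        · simp only [Category.assoc, hchi₁]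
          rw [reassoc_of% (hXtW.lift_fst lR b hcX), hlR₂]
        · simp only [Category.assoc, hchi₂]
          rw [reassoc_of% (hXtW.lift_snd lR b hcX), ← hvd2]
      · exact hXtW.lift_snd _ _ _
    · intro V m m' h1 h2
      apply hXtW.hom_ext
      · apply hRt.hom_ext
        · apply hPtW.hom_ext
          · apply hP''.hom_ext
            · simp only [Category.assoc, hkeyP1t]
              rw [← reassoc_of% hchi₁, reassoc_of% h1]
            · simp only [Category.assoc, hkeyP2t]
              rw [reassoc_of% h2]
          · apply hdW.hom_ext
            · simp only [Category.assoc, hstReq]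
              rw [← reassoc_of% hchi₁, reassoc_of% h1]
            · simp only [Category.assoc, hkeyD2t]
              rw [reassoc_of% h2]
        · simp only [Category.assoc]
          rw [← hchi₁, reassoc_of% h1]
      · exact h2
  obtain ⟨hFchi, hWchi⟩ := T.trivfib_base_change _ _ _ _ hchipb hFdt hWdt
  set vdW : V2 ⟶ dW := hdW.lift (vA ≫ A.q) vd (by simpa only [Category.assoc] using hV2.w)
    with hvdWdef
  have hvdW₁ : vdW ≫ fd₁ = vA ≫ A.q := hdW.lift_fst _ _ _
  have hvdW₂ : vdW ≫ fd₂ = vd := hdW.lift_snd _ _ _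
  have hvdWpb : IsPullback vdW vA fd₁ A.q := by
    refine mk_pb' hvdW₁ ?_ ?_
    · intro V a b h
      refine ⟨hV2.lift b (a ≫ fd₂) ?_, ?_, ?_⟩
      · rw [← Category.assoc, ← h]
        simp only [Category.assoc, hdW.w]
      · apply hdW.hom_ext
        · simp only [Category.assoc, hvdW₁]
          rw [reassoc_of% (hV2.lift_fst b _ _), h]
        · simp only [Category.assoc, hvdW₂, hV2.lift_snd]
      · exact hV2.lift_fst _ _ _
    · intro V m m' h1 h2
      apply hV2.hom_ext
      · exact h2
      · rw [← hvdW₂, ← Category.assoc, ← Category.assoc, h1]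
  obtain ⟨hFvdW, hWvdW⟩ := T.trivfib_base_change _ _ _ _ hvdWpb A.fib_q A.w_q
  have hhtdeq : htd = chi ≫ vdW := by
    apply hdW.hom_ext
    · simp only [hhtddef, Category.assoc, hstReq, hvdW₁, reassoc_of% hchi₁]
    · simp only [hhtddef, Category.assoc, hkeyD2t, hvdW₂, hchi₂]
  have hWhtd : T.W htd := by
    rw [hhtdeq]; exact T.w_comp _ _ hWchi hWvdW
  -- c-side mirror
  obtain ⟨U3c, u3Xc, u3c, hU3c⟩ := T.pb_exists Z.p q'' hFq''
  obtain ⟨hFu3c, hWu3c⟩ := T.trivfib_base_change _ _ _ _ hU3c.flip Z.fib_p Z.w_p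
  set dtc : XtY ⟶ U3c := hU3c.lift ftX gtc hgtcq.symm with hdtcdef
  have hdtc₁ : dtc ≫ u3Xc = ftX := hU3c.lift_fst _ _ _
  have hdtc₂ : dtc ≫ u3c = gtc := hU3c.lift_snd _ _ _
  have hWdtc : T.W dtc := T.w_two_three_right dtc u3c hWu3c (by rw [hdtc₂]; exact hWgtc)
  obtain ⟨K2, k2₁, k2₂, hK2⟩ :=
    T.pb_exists (T.isTerm.from c'') (T.isTerm.from Z.d) (T.fib_to_term _)
  set s₁c : PtY ⟶ K2 := hK2.lift ty₁ (ty₂ ≫ p.fd) (T.isTerm.hom_ext _ _) with hs₁cdef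
  have hs₁c₁ : s₁c ≫ k2₁ = ty₁ := hK2.lift_fst _ _ _
  have hs₁c₂ : s₁c ≫ k2₂ = ty₂ ≫ p.fd := hK2.lift_snd _ _ _
  have hs₁cpb : IsPullback s₁c ty₂ k2₂ p.fd := prodmap_snd T hPtY hK2 p.fd hs₁c₁ hs₁c₂
  have hFs₁c : T.F s₁c := T.fib_base_change _ _ _ _ hs₁cpb hp.2.1
  set π3c : Qt ⟶ U3c := hU3c.lift tqX (tqP ≫ ty₁) (by
    rw [← hgZ₁, ← Category.assoc tqX, ← hQt.w]
    simp only [Category.assoc, hut₁]) with hπ3cdef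
  have hπ3c₁ : π3c ≫ u3Xc = tqX := hU3c.lift_fst _ _ _
  have hπ3c₂ : π3c ≫ u3c = tqP ≫ ty₁ := hU3c.lift_snd _ _ _
  set omc : U3c ⟶ K2 := hK2.lift u3c (u3Xc ≫ Z.q) (T.isTerm.hom_ext _ _) with homcdef
  have homc₁ : omc ≫ k2₁ = u3c := hK2.lift_fst _ _ _
  have homc₂ : omc ≫ k2₂ = u3Xc ≫ Z.q := hK2.lift_snd _ _ _
  have hπ3cpb : IsPullback π3c tqP omc s₁c := by
    refine mk_pb' ?_ ?_ ?_
    · apply hK2.hom_ext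
      · simp only [Category.assoc, homc₁, hs₁c₁, hπ3c₂]
      · simp only [Category.assoc, homc₂, hs₁c₂, reassoc_of% hπ3c₁]
        rw [← hgZ₂, ← Category.assoc tqX, ← hQt.w]
        simp only [Category.assoc, hut₂]
    · intro V a b h
      have h₁ : a ≫ u3c = b ≫ ty₁ := by
        have h₁' := congrArg (· ≫ k2₁) h
        simpa only [Category.assoc, homc₁, hs₁c₁] using h₁'
      have h₂ : a ≫ u3Xc ≫ Z.q = b ≫ ty₂ ≫ p.fd := by
        have h₂' := congrArg (· ≫ k2₂) h
        simpa only [Category.assoc, homc₂, hs₁c₂] using h₂'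
      have hcm : b ≫ ut = (a ≫ u3Xc) ≫ gZ := by
        apply hPZ.hom_ext
        · simp only [Category.assoc, hut₁, hgZ₁, hU3c.w]
          rw [← reassoc_of% h₁]
        · simp only [Category.assoc, hut₂, hgZ₂, h₂]
      refine ⟨hQt.lift b (a ≫ u3Xc) hcm, ?_, ?_⟩
      · apply hU3c.hom_ext
        · simp only [Category.assoc, hπ3c₁, hQt.lift_snd]
        · simp only [Category.assoc, hπ3c₂]
          rw [reassoc_of% (hQt.lift_fst b _ _), h₁]
      · exact hQt.lift_fst _ _ _
    · intro V m m' h1 h2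
      apply hQt.hom_ext
      · exact h2
      · rw [← hπ3c₁, ← Category.assoc, ← Category.assoc, h1]
  have hFπ3c : T.F π3c := T.fib_base_change _ _ _ _ hπ3cpb hFs₁c
  have hdtceq : dtc = mt ≫ π3c := by
    apply hU3c.hom_ext
    · simp only [Category.assoc, hdtc₁, hπ3c₁, hftXdef]
    · simp only [Category.assoc, hdtc₂, hπ3c₂, hgtcdef]
  have hFdtc : T.F dtc := by rw [hdtceq]; exact T.f_comp _ _ hFmt hFπ3c
  obtain ⟨V2c, vAc, vcc, hV2c⟩ := T.pb_exists (A.p ≫ Φ.map f.fc) q'' hFq''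
  set ξ3c : V2c ⟶ U3c := hU3c.lift (vAc ≫ f.fX) vcc (by
    simp only [Category.assoc, ← f.wc, hV2c.w]) with hξ3cdef
  have hξ3c₁ : ξ3c ≫ u3Xc = vAc ≫ f.fX := hU3c.lift_fst _ _ _
  have hξ3c₂ : ξ3c ≫ u3c = vcc := hU3c.lift_snd _ _ _
  set chic : XtW ⟶ V2c := hV2c.lift (stR ≫ rtX) (stX ≫ gtc) (by
    simp only [Category.assoc, f.wc, reassoc_of% hstf, hgtcq]) with hchicdef
  have hchic₁ : chic ≫ vAc = stR ≫ rtX := hV2c.lift_fst _ _ _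
  have hchic₂ : chic ≫ vcc = stX ≫ gtc := hV2c.lift_snd _ _ _
  have hchicpb : IsPullback chic stX ξ3c dtc := by
    refine mk_pb' ?_ ?_ ?_
    · apply hU3c.hom_ext
      · simp only [Category.assoc, hξ3c₁, hdtc₁, reassoc_of% hchic₁]
        exact hstf
      · simp only [Category.assoc, hξ3c₂, hdtc₂, hchic₂]
    · intro V a b h
      have h₁ : a ≫ vAc ≫ f.fX = b ≫ ftX := by
        have h₁' := congrArg (· ≫ u3Xc) h
        simpa only [Category.assoc, hξ3c₁, hdtc₁] using h₁'
      have h₂ : a ≫ vcc = b ≫ gtc := by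
        have h₂' := congrArg (· ≫ u3c) h
        simpa only [Category.assoc, hξ3c₂, hdtc₂] using h₂'
      have hc1 : (a ≫ vAc ≫ A.p) ≫ Φ.map f.fc = (b ≫ gtc) ≫ q'' := by
        simp only [Category.assoc, f.wc, hgtcq, reassoc_of% h₁]
      have hc2 : (a ≫ vAc ≫ A.q) ≫ f.fd = (b ≫ gtd) ≫ p.fd := by
        simp only [Category.assoc, f.wd, reassoc_of% h₁, hcomm3]
      set lP : V ⟶ P'' := hP''.lift (a ≫ vAc ≫ A.p) (b ≫ gtc) hc1 with hlPdef
      have hlP₁ : lP ≫ π₁'' = a ≫ vAc ≫ A.p := hP''.lift_fst _ _ _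
      have hlP₂ : lP ≫ π₂'' = b ≫ gtc := hP''.lift_snd _ _ _
      set lD : V ⟶ dW := hdW.lift (a ≫ vAc ≫ A.q) (b ≫ gtd) hc2 with hlDdef
      have hlD₁ : lD ≫ fd₁ = a ≫ vAc ≫ A.q := hdW.lift_fst _ _ _
      have hlD₂ : lD ≫ fd₂ = b ≫ gtd := hdW.lift_snd _ _ _
      set lW : V ⟶ PtW := hPtW.lift lP lD (T.isTerm.hom_ext _ _) with hlWdef
      have hlW₁ : lW ≫ tw₁ = lP := hPtW.lift_fst _ _ _
      have hlW₂ : lW ≫ tw₂ = lD := hPtW.lift_snd _ _ _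
      have hcR : lW ≫ πtA = (a ≫ vAc) ≫ gA := by
        apply hPA.hom_ext
        · simp only [Category.assoc, hπtA₁, hgA₁, reassoc_of% hlW₁, hlP₁]
        · simp only [Category.assoc, hπtA₂, hgA₂, reassoc_of% hlW₂, hlD₁]
      set lR : V ⟶ Rt := hRt.lift lW (a ≫ vAc) hcR with hlRdef
      have hlR₁ : lR ≫ rtP = lW := hRt.lift_fst _ _ _
      have hlR₂ : lR ≫ rtX = a ≫ vAc := hRt.lift_snd _ _ _
      have hcX : lR ≫ tt' = b ≫ mt := by
        apply hQt.hom_ext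
        · simp only [Category.assoc, htt'₁]
          rw [reassoc_of% hlR₁]
          apply hPtY.hom_ext
          · simp only [Category.assoc, hπtY₁, reassoc_of% hlW₁, hlP₂, ← hgtcdef]
          · simp only [Category.assoc, hπtY₂, reassoc_of% hlW₂, hlD₂, ← hgtddef]
        · simp only [Category.assoc, htt'₂, reassoc_of% hlR₂, h₁, reassoc_of% h₁, ← hftXdef]
      refine ⟨hXtW.lift lR b hcX, ?_, ?_⟩
      · apply hV2c.hom_ext
        · simp only [Category.assoc, hchic₁]
          rw [reassoc_of% (hXtW.lift_fst lR b hcX), hlR₂]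
        · simp only [Category.assoc, hchic₂]
          rw [reassoc_of% (hXtW.lift_snd lR b hcX), ← h₂]
      · exact hXtW.lift_snd _ _ _
    · intro V m m' h1 h2
      apply hXtW.hom_ext
      · apply hRt.hom_ext
        · apply hPtW.hom_ext
          · apply hP''.hom_ext
            · simp only [Category.assoc, hkeyP1t]
              rw [← reassoc_of% hchic₁, reassoc_of% h1]
            · simp only [Category.assoc, hkeyP2t]
              rw [reassoc_of% h2]
          · apply hdW.hom_ext
            · simp only [Category.assoc, hstReq]
              rw [← reassoc_of% hchic₁, reassoc_of% h1]
            · simp only [Category.assoc, hkeyD2t]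
              rw [reassoc_of% h2]
        · simp only [Category.assoc]
          rw [← hchic₁, reassoc_of% h1]
      · exact h2
  obtain ⟨hFchic, hWchic⟩ := T.trivfib_base_change _ _ _ _ hchicpb hFdtc hWdtc
  set vPc : V2c ⟶ P'' := hP''.lift (vAc ≫ A.p) vcc
    (by simpa only [Category.assoc] using hV2c.w) with hvPcdef
  have hvPc₁ : vPc ≫ π₁'' = vAc ≫ A.p := hP''.lift_fst _ _ _
  have hvPc₂ : vPc ≫ π₂'' = vcc := hP''.lift_snd _ _ _
  have hvPcpb : IsPullback vPc vAc π₁'' A.p := by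
    refine mk_pb' hvPc₁ ?_ ?_
    · intro V a b h
      refine ⟨hV2c.lift b (a ≫ π₂'') ?_, ?_, ?_⟩
      · rw [← Category.assoc, ← h]
        simp only [Category.assoc, hP''.w]
      · apply hP''.hom_ext
        · simp only [Category.assoc, hvPc₁]
          rw [reassoc_of% (hV2c.lift_fst b _ _), h]
        · simp only [Category.assoc, hvPc₂, hV2c.lift_snd]
      · exact hV2c.lift_fst _ _ _
    · intro V m m' h1 h2
      apply hV2c.hom_ext
      · exact h2
      · rw [← hvPc₂, ← Category.assoc, ← Category.assoc, h1]
  obtain ⟨hFvPc, hWvPc⟩ := T.trivfib_base_change _ _ _ _ hvPcpb A.fib_p A.w_p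
  have hhtceq : htc = chic ≫ vPc := by
    apply hP''.hom_ext
    · simp only [hhtcdef, Category.assoc, hkeyP1t, hvPc₁, reassoc_of% hchic₁]
    · simp only [hhtcdef, Category.assoc, hkeyP2t, hvPc₂, hchic₂]
  have hWhtc : T.W htc := by
    rw [hhtceq]; exact T.w_comp _ _ hWchic hWvPc
  -- Stage 4: the legs of the new object are weak equivalences
  have hpWm : pW ≫ m'' = Θ ≫ Θt ≫ htc := by
    simp only [hpWdef, hhtcdef, Category.assoc, reassoc_of% hΘt₁, reassoc_of% hΘ₁,
      reassoc_of% hmu₁, hnu₁]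
  have hWpW : T.W pW := T.w_two_three_right pW m'' hWm''
    (by rw [hpWm]; exact T.w_comp _ _ hWΘ (T.w_comp _ _ hWΘt hWhtc))
  have hqWeq : qW = Θ ≫ Θt ≫ htd := by
    simp only [hqWdef, hhtddef, Category.assoc, reassoc_of% hΘt₁, reassoc_of% hΘ₁,
      reassoc_of% hmu₁, hnu₂]
  have hWqW : T.W qW := by
    rw [hqWeq]; exact T.w_comp _ _ hWΘ (T.w_comp _ _ hWΘt hWhtd)
  -- Stage 5: assemble the pullback object and projections
  have hgapW : ∀ {P : D} (pr₁ : P ⟶ Φ.obj cW) (pr₂ : P ⟶ dW),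
      IsPullback pr₁ pr₂ (T.isTerm.from (Φ.obj cW)) (T.isTerm.from dW) →
      ∀ g : XW ⟶ P, g ≫ pr₁ = pW → g ≫ pr₂ = qW → T.F g := gap_intro T Φ pW qW hPW (σR ≫ rP)
    (by rw [hpWdef]; exact Category.assoc _ _ _)
    (by rw [hqWdef]; exact Category.assoc _ _ _) (T.f_comp _ _ hFσR hFrP)
  set Wo : GlueObj S T Φ := ⟨cW, dW, XW, pW, qW, hFpW, hWpW, hFqW, hWqW, hgapW⟩ with hWodef
  have hfstwc : pW ≫ Φ.map fc₁ = (σR ≫ rX) ≫ A.p := by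
    simp only [hpWdef, Category.assoc, hkeyA]
  have hfstwd : qW ≫ fd₁ = (σR ≫ rX) ≫ A.q := by
    simp only [hqWdef, Category.assoc, hkeyC]
  have hsndwc : pW ≫ Φ.map fc₂ = σY ≫ Y.p := by
    simp only [hpWdef, Category.assoc, hkeyB]
  have hsndwd : qW ≫ fd₂ = σY ≫ Y.q := by
    simp only [hqWdef, Category.assoc, hkeyD]
  set fstW : Wo ⟶ A := ⟨fc₁, fd₁, σR ≫ rX, hfstwc, hfstwd⟩ with hfstWdef
  set sndW : Wo ⟶ Y := ⟨fc₂, fd₂, σY, hsndwc, hsndwd⟩ with hsndWdef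
  have hXpb : IsPullback (σR ≫ rX) σY f.fX p.fX := by
    refine mk_pb' ?_ ?_ ?_
    · simp only [Category.assoc]
      rw [← ht₂, reassoc_of% hXW.w, hmp₂]
    · intro V a b h
      have hc1 : (a ≫ A.p) ≫ Φ.map f.fc = (b ≫ Y.p) ≫ Φ.map p.fc := by
        simp only [Category.assoc, f.wc, p.wc]
        rw [reassoc_of% h]
      have hc2 : (a ≫ A.q) ≫ f.fd = (b ≫ Y.q) ≫ p.fd := by
        simp only [Category.assoc, f.wd, p.wd]
        rw [reassoc_of% h]
      set lc := hΦpb.lift (a ≫ A.p) (b ≫ Y.p) hc1 with hlcdef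
      have hlc₁ : lc ≫ Φ.map fc₁ = a ≫ A.p := hΦpb.lift_fst _ _ _
      have hlc₂ : lc ≫ Φ.map fc₂ = b ≫ Y.p := hΦpb.lift_snd _ _ _
      set ld := hdW.lift (a ≫ A.q) (b ≫ Y.q) hc2 with hlddef
      have hld₁ : ld ≫ fd₁ = a ≫ A.q := hdW.lift_fst _ _ _
      have hld₂ : ld ≫ fd₂ = b ≫ Y.q := hdW.lift_snd _ _ _
      set lPW := hPW.lift lc ld (T.isTerm.hom_ext _ _) with hlPWdef
      have hlPW₁ : lPW ≫ w₁ = lc := hPW.lift_fst _ _ _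
      have hlPW₂ : lPW ≫ w₂ = ld := hPW.lift_snd _ _ _
      have hcR : lPW ≫ πA = a ≫ gA := by
        apply hPA.hom_ext
        · simp only [Category.assoc, hπA₁, hgA₁, reassoc_of% hlPW₁, hlc₁]
        · simp only [Category.assoc, hπA₂, hgA₂, reassoc_of% hlPW₂, hld₁]
      set lR := hR.lift lPW a hcR with hlRdef
      have hlR₁ : lR ≫ rP = lPW := hR.lift_fst _ _ _
      have hlR₂ : lR ≫ rX = a := hR.lift_snd _ _ _
      have hcQ : lR ≫ t = b ≫ mp := by
        apply hQ.hom_ext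
        · simp only [Category.assoc, ht₁, hmp₁]
          rw [reassoc_of% hlR₁]
          apply hPY.hom_ext
          · simp only [Category.assoc, hπY₁, reassoc_of% hlPW₁, hlc₂, hgY₁]
          · simp only [Category.assoc, hπY₂, reassoc_of% hlPW₂, hld₂, hgY₂]
        · simp only [Category.assoc, ht₂, hmp₂, reassoc_of% hlR₂, h]
      refine ⟨hXW.lift lR b hcQ, ?_, ?_⟩
      · rw [← Category.assoc, hXW.lift_fst, hlR₂]
      · exact hXW.lift_snd _ _ _
    · intro V m m' h1 h2
      have h1' : m ≫ σR ≫ rX = m' ≫ σR ≫ rX := by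
        simpa only [Category.assoc] using h1
      apply hXW.hom_ext
      · apply hR.hom_ext
        · apply hPW.hom_ext
          · apply hΦpb.hom_ext
            · simp only [Category.assoc, hkeyA]
              rw [reassoc_of% h1']
            · simp only [Category.assoc, hkeyB]
              rw [reassoc_of% h2]
          · apply hdW.hom_ext
            · simp only [Category.assoc, hkeyC]
              rw [reassoc_of% h1']
            · simp only [Category.assoc, hkeyD]
              rw [reassoc_of% h2]
        · simp only [Category.assoc]
          exact h1'
      · exact h2
  have hGpb : IsPullback fstW sndW f p := by
    refine mk_pb' ?_ ?_ ?_
    · exact glue_hom_ext S T Φ hcW.w hdW.w hXpb.w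
    · intro V α β h
      have hfc : α.fc ≫ f.fc = β.fc ≫ p.fc := congrArg GlueHom.fc h
      have hfd : α.fd ≫ f.fd = β.fd ≫ p.fd := congrArg GlueHom.fd h
      have hfX : α.fX ≫ f.fX = β.fX ≫ p.fX := congrArg GlueHom.fX h
      have hlX₁ : hXpb.lift α.fX β.fX hfX ≫ σR ≫ rX = α.fX := by
        have h0 := hXpb.lift_fst α.fX β.fX hfX
        simpa only [Category.assoc] using h0
      have hlX₂ : hXpb.lift α.fX β.fX hfX ≫ σY = β.fX := hXpb.lift_snd _ _ _
      have hwc : V.p ≫ Φ.map (hcW.lift α.fc β.fc hfc) = hXpb.lift α.fX β.fX hfX ≫ pW := by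
        apply hΦpb.hom_ext
        · rw [Category.assoc, ← Φ.map_comp, hcW.lift_fst, α.wc]
          simp only [hpWdef, Category.assoc, hkeyA, reassoc_of% hlX₁]
        · rw [Category.assoc, ← Φ.map_comp, hcW.lift_snd, β.wc]
          simp only [hpWdef, Category.assoc, hkeyB, reassoc_of% hlX₂]
      have hwd : V.q ≫ hdW.lift α.fd β.fd hfd = hXpb.lift α.fX β.fX hfX ≫ qW := by
        apply hdW.hom_ext
        · rw [Category.assoc, hdW.lift_fst, α.wd]
          simp only [hqWdef, Category.assoc, hkeyC, reassoc_of% hlX₁]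
        · rw [Category.assoc, hdW.lift_snd, β.wd]
          simp only [hqWdef, Category.assoc, hkeyD, reassoc_of% hlX₂]
      refine ⟨⟨hcW.lift α.fc β.fc hfc, hdW.lift α.fd β.fd hfd,
        hXpb.lift α.fX β.fX hfX, hwc, hwd⟩, ?_, ?_⟩
      · refine glue_hom_ext S T Φ (hcW.lift_fst _ _ _) (hdW.lift_fst _ _ _) ?_
        show hXpb.lift α.fX β.fX hfX ≫ (σR ≫ rX) = α.fX
        simpa only [Category.assoc] using hlX₁
      · exact glue_hom_ext S T Φ (hcW.lift_snd _ _ _) (hdW.lift_snd _ _ _) hlX₂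
    · intro V m m' h1 h2
      refine glue_hom_ext S T Φ ?_ ?_ ?_
      · exact hcW.hom_ext (congrArg GlueHom.fc h1) (congrArg GlueHom.fc h2)
      · exact hdW.hom_ext (congrArg GlueHom.fd h1) (congrArg GlueHom.fd h2)
      · exact hXpb.hom_ext (congrArg GlueHom.fX h1) (congrArg GlueHom.fX h2)
  have hFfst : GlueFib S T Φ fstW :=
    glueFib_intro S T Φ fstW (S.fib_base_change _ _ _ _ hcW hp.1)
      (T.fib_base_change _ _ _ _ hdW hp.2.1) hPW hPA hgA₁ hgA₂ hπA₁ hπA₂ hR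
      rfl rfl rfl hFσR
  refine ⟨Wo, fstW, sndW, hGpb, hcW, hdW, hXpb, hFfst, ?_⟩
  intro wp
  refine ⟨(S.trivfib_base_change _ _ _ _ hcW hp.1 wp.1).2,
    (T.trivfib_base_change _ _ _ _ hdW hp.2.1 wp.2.1).2, ?_⟩
  have hwfc : S.W fc₁ := (S.trivfib_base_change _ _ _ _ hcW hp.1 wp.1).2
  have hWcomp : T.W ((σR ≫ rX) ≫ A.p) := by
    rw [← hfstwc]
    exact T.w_comp _ _ hWpW (hw fc₁ hwfc)
  exact T.w_two_three_right (σR ≫ rX) A.p A.w_p hWcomp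

end GluePB

section GlueTransport

/-- Transport of the conclusions of `glue_pb` to an arbitrary pullback square. -/
lemma glue_pb_transport
    (hw : ∀ {x y : C} (f : x ⟶ y), S.W f → T.W (Φ.map f))
    (hpb : ∀ {p x y z : C} (fst : p ⟶ x) (snd : p ⟶ y) (f : x ⟶ z) (g : y ⟶ z),
      S.F g → IsPullback fst snd f g →
        IsPullback (Φ.map fst) (Φ.map snd) (Φ.map f) (Φ.map g) ∧
        IsHomotopyPB T (Φ.map fst) (Φ.map snd) (Φ.map f) (Φ.map g))
    {Wg A Y Z : GlueObj S T Φ} (fst : Wg ⟶ A) (snd : Wg ⟶ Y) (f : A ⟶ Z) (p : Y ⟶ Z)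
    (h : IsPullback fst snd f p) (hp : GlueFib S T Φ p) :
    GlueFib S T Φ fst ∧ (GlueW S T Φ p → GlueW S T Φ fst) ∧
    IsPullback fst.fc snd.fc f.fc p.fc ∧ IsPullback fst.fd snd.fd f.fd p.fd := by
  obtain ⟨Wo, fst0, snd0, hGpb, hc0, hd0, hX0, hFfst0, hWfst0⟩ := glue_pb S T Φ hw hpb f p hp
  have he₁ : (h.isoIsPullback _ _ hGpb).hom ≫ fst0 = fst :=
    by apply IsPullback.isoIsPullback_hom_fst
  have he₂ : (h.isoIsPullback _ _ hGpb).hom ≫ snd0 = snd :=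
    by apply IsPullback.isoIsPullback_hom_snd
  set e := h.isoIsPullback _ _ hGpb with hedef
  have hiso : IsIso e.hom := inferInstance
  have hecfc : e.inv.fc ≫ fst.fc = fst0.fc := by
    have h0 := congrArg GlueHom.fc (e.inv_hom_id)
    have h1 := congrArg GlueHom.fc he₁
    show e.inv.fc ≫ fst.fc = fst0.fc
    rw [← h1]
    show e.inv.fc ≫ e.hom.fc ≫ fst0.fc = fst0.fc
    rw [← Category.assoc]
    exact (congrArg (· ≫ fst0.fc) h0).trans (Category.id_comp _)
  have hecsc : e.inv.fc ≫ snd.fc = snd0.fc := by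
    have h0 := congrArg GlueHom.fc (e.inv_hom_id)
    have h1 := congrArg GlueHom.fc he₂
    show e.inv.fc ≫ snd.fc = snd0.fc
    rw [← h1]
    show e.inv.fc ≫ e.hom.fc ≫ snd0.fc = snd0.fc
    rw [← Category.assoc]
    exact (congrArg (· ≫ snd0.fc) h0).trans (Category.id_comp _)
  have hecfd : e.inv.fd ≫ fst.fd = fst0.fd := by
    have h0 := congrArg GlueHom.fd (e.inv_hom_id)
    have h1 := congrArg GlueHom.fd he₁
    show e.inv.fd ≫ fst.fd = fst0.fd
    rw [← h1]
    show e.inv.fd ≫ e.hom.fd ≫ fst0.fd = fst0.fd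
    rw [← Category.assoc]
    exact (congrArg (· ≫ fst0.fd) h0).trans (Category.id_comp _)
  have hecsd : e.inv.fd ≫ snd.fd = snd0.fd := by
    have h0 := congrArg GlueHom.fd (e.inv_hom_id)
    have h1 := congrArg GlueHom.fd he₂
    show e.inv.fd ≫ snd.fd = snd0.fd
    rw [← h1]
    show e.inv.fd ≫ e.hom.fd ≫ snd0.fd = snd0.fd
    rw [← Category.assoc]
    exact (congrArg (· ≫ snd0.fd) h0).trans (Category.id_comp _)
  have heciso : IsIso e.inv.fc ∧ IsIso e.inv.fd ∧ IsIso e.inv.fX :=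
    glue_isIso_comps S T Φ e.inv inferInstance
  refine ⟨?_, ?_, ?_, ?_⟩
  · rw [← he₁]
    exact glueFib_comp S T Φ _ _ (glueFib_of_iso S T Φ e.hom inferInstance) hFfst0
  · intro wp
    rw [← he₁]
    exact glueW_comp S T Φ _ _ (glueW_iso S T Φ e.hom inferInstance) (hWfst0 wp)
  · haveI := heciso.1
    exact hc0.of_iso (asIso e.inv.fc) (Iso.refl _) (Iso.refl _) (Iso.refl _)
      (by simpa using hecfc.symm) (by simpa using hecsc.symm) (by simp) (by simp)
  · haveI := heciso.2.1
    exact hd0.of_iso (asIso e.inv.fd) (Iso.refl _) (Iso.refl _) (Iso.refl _)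
      (by simpa using hecfd.symm) (by simpa using hecsd.symm) (by simp) (by simp)

end GlueTransport

section GlueDiag

set_option maxHeartbeats 1600000 in
/-- Factorization of the diagonal in the glued category. -/
lemma glue_diag
    (hw : ∀ {x y : C} (f : x ⟶ y), S.W f → T.W (Φ.map f))
    (hterm : T.W (T.isTerm.from (Φ.obj S.term)))
    (hpb : ∀ {p x y z : C} (fst : p ⟶ x) (snd : p ⟶ y) (f : x ⟶ z) (g : y ⟶ z),
      S.F g → IsPullback fst snd f g →
        IsPullback (Φ.map fst) (Φ.map snd) (Φ.map f) (Φ.map g) ∧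
        IsHomotopyPB T (Φ.map fst) (Φ.map snd) (Φ.map f) (Φ.map g))
    {A AA : GlueObj S T Φ} (pr₁ pr₂ : AA ⟶ A)
    (hAA : IsPullback pr₁ pr₂ ((glueTerm_isTerminal S T Φ hterm).from A)
      ((glueTerm_isTerminal S T Φ hterm).from A)) :
    ∃ (P : GlueObj S T Φ) (i : A ⟶ P) (q : P ⟶ AA), GlueW S T Φ i ∧ GlueFib S T Φ q ∧
      i ≫ q ≫ pr₁ = 𝟙 A ∧ i ≫ q ≫ pr₂ = 𝟙 A := by
  set ft : A ⟶ glueTerm S T Φ hterm := (glueTerm_isTerminal S T Φ hterm).from A with hftdef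
  have hFft : GlueFib S T Φ ft := glueFib_to_term S T Φ hterm ft
  obtain ⟨Wo, fst0, snd0, hGpb, hc0, hd0, hX0, hFfst0, -⟩ := glue_pb S T Φ hw hpb ft ft hFft
  have hftc : ft.fc = S.isTerm.from A.c := S.isTerm.hom_ext _ _
  have hftd : ft.fd = T.isTerm.from A.d := T.isTerm.hom_ext _ _
  have hftX : ft.fX = A.p ≫ Φ.map ft.fc := (glue_to_term_comps S T Φ hterm ft).2.2
  have hFftc : S.F ft.fc := by rw [hftc]; exact S.fib_to_term _
  have hc0' : IsPullback fst0.fc snd0.fc (S.isTerm.from A.c) (S.isTerm.from A.c) := by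
    rw [← hftc]; exact hc0
  have hd0' : IsPullback fst0.fd snd0.fd (T.isTerm.from A.d) (T.isTerm.from A.d) := by
    rw [← hftd]; exact hd0
  obtain ⟨Pc, ic, ρc, hWic, hFρc, hsc₁, hsc₂⟩ := S.diag_fact fst0.fc snd0.fc hc0'
  obtain ⟨Pd, idd, ρd, hWid, hFρd, hsd₁, hsd₂⟩ := T.diag_fact fst0.fd snd0.fd hd0'
  have hΦ0 := (hpb fst0.fc snd0.fc ft.fc ft.fc hFftc hc0).1
  -- products
  obtain ⟨PA, a₁, a₂, hPA⟩ :=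
    T.pb_exists (T.isTerm.from (Φ.obj A.c)) (T.isTerm.from A.d) (T.fib_to_term _)
  obtain ⟨XX, x₁, x₂, hXX⟩ :=
    T.pb_exists (T.isTerm.from A.X) (T.isTerm.from A.X) (T.fib_to_term _)
  obtain ⟨PP, pp₁, pp₂, hPP⟩ :=
    T.pb_exists (T.isTerm.from PA) (T.isTerm.from PA) (T.fib_to_term _)
  obtain ⟨PAX, pax₁, pax₂, hPAX⟩ :=
    T.pb_exists (T.isTerm.from PA) (T.isTerm.from A.X) (T.fib_to_term _)
  obtain ⟨FP, fp₁, fp₂, hFP⟩ :=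
    T.pb_exists (T.isTerm.from (Φ.obj Pc)) (T.isTerm.from Pd) (T.fib_to_term _)
  set gA : A.X ⟶ PA := hPA.lift A.p A.q (T.isTerm.hom_ext _ _) with hgAdef
  have hgA₁ : gA ≫ a₁ = A.p := hPA.lift_fst _ _ _
  have hgA₂ : gA ≫ a₂ = A.q := hPA.lift_snd _ _ _
  have hFgA : T.F gA := A.gap a₁ a₂ hPA gA hgA₁ hgA₂
  set th₁a : XX ⟶ PAX := hPAX.lift (x₁ ≫ gA) x₂ (T.isTerm.hom_ext _ _) with hth₁adef
  have hth₁a₁ : th₁a ≫ pax₁ = x₁ ≫ gA := hPAX.lift_fst _ _ _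
  have hth₁a₂ : th₁a ≫ pax₂ = x₂ := hPAX.lift_snd _ _ _
  have hFth₁a : T.F th₁a :=
    T.fib_base_change _ _ _ _ (prodmap_fst T hXX hPAX gA hth₁a₁ hth₁a₂) hFgA
  set th₁b : PAX ⟶ PP := hPP.lift pax₁ (pax₂ ≫ gA) (T.isTerm.hom_ext _ _) with hth₁bdef
  have hth₁b₁ : th₁b ≫ pp₁ = pax₁ := hPP.lift_fst _ _ _
  have hth₁b₂ : th₁b ≫ pp₂ = pax₂ ≫ gA := hPP.lift_snd _ _ _
  have hFth₁b : T.F th₁b :=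
    T.fib_base_change _ _ _ _ (prodmap_snd T hPAX hPP gA hth₁b₁ hth₁b₂) hFgA
  set θ₁ : XX ⟶ PP := th₁a ≫ th₁b with hθ₁def
  have hFθ₁ : T.F θ₁ := T.f_comp _ _ hFth₁a hFth₁b
  have hθ₁₁ : θ₁ ≫ pp₁ = x₁ ≫ gA := by
    rw [hθ₁def, Category.assoc, hth₁b₁, hth₁a₁]
  have hθ₁₂ : θ₁ ≫ pp₂ = x₂ ≫ gA := by
    rw [hθ₁def, Category.assoc, hth₁b₂, reassoc_of% hth₁a₂]
  set θ₂a : FP ⟶ PA := hPA.lift (fp₁ ≫ Φ.map (ρc ≫ fst0.fc)) (fp₂ ≫ ρd ≫ fst0.fd)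
    (T.isTerm.hom_ext _ _) with hθ₂adef
  have hθ₂a₁ : θ₂a ≫ a₁ = fp₁ ≫ Φ.map (ρc ≫ fst0.fc) := hPA.lift_fst _ _ _
  have hθ₂a₂ : θ₂a ≫ a₂ = fp₂ ≫ ρd ≫ fst0.fd := hPA.lift_snd _ _ _
  set θ₂b : FP ⟶ PA := hPA.lift (fp₁ ≫ Φ.map (ρc ≫ snd0.fc)) (fp₂ ≫ ρd ≫ snd0.fd)
    (T.isTerm.hom_ext _ _) with hθ₂bdef
  have hθ₂b₁ : θ₂b ≫ a₁ = fp₁ ≫ Φ.map (ρc ≫ snd0.fc) := hPA.lift_fst _ _ _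
  have hθ₂b₂ : θ₂b ≫ a₂ = fp₂ ≫ ρd ≫ snd0.fd := hPA.lift_snd _ _ _
  set θ₂ : FP ⟶ PP := hPP.lift θ₂a θ₂b (T.isTerm.hom_ext _ _) with hθ₂def
  have hθ₂₁ : θ₂ ≫ pp₁ = θ₂a := hPP.lift_fst _ _ _
  have hθ₂₂ : θ₂ ≫ pp₂ = θ₂b := hPP.lift_snd _ _ _
  obtain ⟨M, m₁, mXX, hM⟩ := T.pb_exists θ₂ θ₁ hFθ₁
  have hKM1 : mXX ≫ x₁ ≫ A.p = m₁ ≫ fp₁ ≫ Φ.map (ρc ≫ fst0.fc) := by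
    have h0 := congrArg (· ≫ pp₁ ≫ a₁) hM.w
    simpa only [Category.assoc, reassoc_of% hθ₂₁, hθ₂a₁, reassoc_of% hθ₁₁, hgA₁] using h0.symm
  have hKM2 : mXX ≫ x₁ ≫ A.q = m₁ ≫ fp₂ ≫ ρd ≫ fst0.fd := by
    have h0 := congrArg (· ≫ pp₁ ≫ a₂) hM.w
    simpa only [Category.assoc, reassoc_of% hθ₂₁, hθ₂a₂, reassoc_of% hθ₁₁, hgA₂] using h0.symm
  have hKM3 : mXX ≫ x₂ ≫ A.p = m₁ ≫ fp₁ ≫ Φ.map (ρc ≫ snd0.fc) := by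
    have h0 := congrArg (· ≫ pp₂ ≫ a₁) hM.w
    simpa only [Category.assoc, reassoc_of% hθ₂₂, hθ₂b₁, reassoc_of% hθ₁₂, hgA₁] using h0.symm
  have hKM4 : mXX ≫ x₂ ≫ A.q = m₁ ≫ fp₂ ≫ ρd ≫ snd0.fd := by
    have h0 := congrArg (· ≫ pp₂ ≫ a₂) hM.w
    simpa only [Category.assoc, reassoc_of% hθ₂₂, hθ₂b₂, reassoc_of% hθ₁₂, hgA₂] using h0.symm
  have hcomp : fst0.fc ≫ ft.fc = snd0.fc ≫ ft.fc := S.isTerm.hom_ext _ _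
  have hin : ρc ≫ fst0.fc ≫ ft.fc = ρc ≫ snd0.fc ≫ ft.fc := by rw [hcomp]
  have hMcomm : mXX ≫ x₁ ≫ ft.fX = mXX ≫ x₂ ≫ ft.fX := by
    rw [hftX]
    simp only [Category.assoc, reassoc_of% hKM1, reassoc_of% hKM3, ← Φ.map_comp, hin]
  -- the canonical map into the matching object of the path object
  set ζFP : A.X ⟶ FP := hFP.lift (A.p ≫ Φ.map ic) (A.q ≫ idd) (T.isTerm.hom_ext _ _)
    with hζFPdef
  have hζFP₁ : ζFP ≫ fp₁ = A.p ≫ Φ.map ic := hFP.lift_fst _ _ _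
  have hζFP₂ : ζFP ≫ fp₂ = A.q ≫ idd := hFP.lift_snd _ _ _
  set ΔX : A.X ⟶ XX := hXX.lift (𝟙 A.X) (𝟙 A.X) (T.isTerm.hom_ext _ _) with hΔXdef
  have hΔX₁ : ΔX ≫ x₁ = 𝟙 A.X := hXX.lift_fst _ _ _
  have hΔX₂ : ΔX ≫ x₂ = 𝟙 A.X := hXX.lift_snd _ _ _
  have hζcomm : ζFP ≫ θ₂ = ΔX ≫ θ₁ := by
    apply hPP.hom_ext
    · apply hPA.hom_ext
      · simp only [Category.assoc, reassoc_of% hθ₂₁, hθ₂a₁, reassoc_of% hθ₁₁, hgA₁,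
          reassoc_of% hζFP₁, reassoc_of% hΔX₁, ← Φ.map_comp, hsc₁, Φ.map_id,
          Category.comp_id, Category.id_comp]
      · simp only [Category.assoc, reassoc_of% hθ₂₁, hθ₂a₂, reassoc_of% hθ₁₁, hgA₂,
          reassoc_of% hζFP₂, reassoc_of% hΔX₁, hsd₁, Category.comp_id, Category.id_comp]
    · apply hPA.hom_ext
      · simp only [Category.assoc, reassoc_of% hθ₂₂, hθ₂b₁, reassoc_of% hθ₁₂, hgA₁,
          reassoc_of% hζFP₁, reassoc_of% hΔX₂, ← Φ.map_comp, hsc₂, Φ.map_id,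
          Category.comp_id, Category.id_comp]
      · simp only [Category.assoc, reassoc_of% hθ₂₂, hθ₂b₂, reassoc_of% hθ₁₂, hgA₂,
          reassoc_of% hζFP₂, reassoc_of% hΔX₂, hsd₂, Category.comp_id, Category.id_comp]
  set ζ : A.X ⟶ M := hM.lift ζFP ΔX hζcomm with hζdef
  have hζ₁ : ζ ≫ m₁ = ζFP := hM.lift_fst _ _ _
  have hζ₂ : ζ ≫ mXX = ΔX := hM.lift_snd _ _ _
  obtain ⟨EX, iE, τE, ρE, hiEτ, hFτE, hWτE, hWiE, hFρE, hiEρ, -⟩ := fib_brown T ζ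
  have hFm₁ : T.F m₁ := T.fib_base_change _ _ _ _ hM hFθ₁
  set gE : EX ⟶ FP := ρE ≫ m₁ with hgEdef
  have hFgE : T.F gE := T.f_comp _ _ hFρE hFm₁
  set pE : EX ⟶ Φ.obj Pc := gE ≫ fp₁ with hpEdef
  set qE : EX ⟶ Pd := gE ≫ fp₂ with hqEdef
  have hFfp₁ : T.F fp₁ := T.fib_base_change _ _ _ _ hFP (T.fib_to_term _)
  have hFfp₂ : T.F fp₂ := T.fib_base_change _ _ _ _ hFP.flip (T.fib_to_term _)
  have hFpE : T.F pE := T.f_comp _ _ hFgE hFfp₁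
  have hFqE : T.F qE := T.f_comp _ _ hFgE hFfp₂
  have hiEpE : iE ≫ pE = A.p ≫ Φ.map ic := by
    simp only [hpEdef, hgEdef, Category.assoc, reassoc_of% hiEρ, reassoc_of% hζ₁, hζFP₁]
  have hiEqE : iE ≫ qE = A.q ≫ idd := by
    simp only [hqEdef, hgEdef, Category.assoc, reassoc_of% hiEρ, reassoc_of% hζ₁, hζFP₂]
  have hWpE : T.W pE := T.w_two_three_left iE pE hWiE
    (by rw [hiEpE]; exact T.w_comp _ _ A.w_p (hw ic hWic))
  have hWqE : T.W qE := T.w_two_three_left iE qE hWiE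
    (by rw [hiEqE]; exact T.w_comp _ _ A.w_q hWid)
  set end1 : EX ⟶ A.X := ρE ≫ mXX ≫ x₁ with hend1def
  set end2 : EX ⟶ A.X := ρE ≫ mXX ≫ x₂ with hend2def
  have hqEXcomm : end1 ≫ ft.fX = end2 ≫ ft.fX := by
    simpa only [hend1def, hend2def, Category.assoc] using congrArg (ρE ≫ ·) hMcomm
  set qEX : EX ⟶ Wo.X := hX0.lift end1 end2 hqEXcomm with hqEXdef
  have hqEX₁ : qEX ≫ fst0.fX = end1 := hX0.lift_fst _ _ _
  have hqEX₂ : qEX ≫ snd0.fX = end2 := hX0.lift_snd _ _ _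
  have hiEend1 : iE ≫ end1 = 𝟙 A.X := by
    simp only [hend1def, Category.assoc, reassoc_of% hiEρ, reassoc_of% hζ₂, hΔX₁]
  have hiEend2 : iE ≫ end2 = 𝟙 A.X := by
    simp only [hend2def, Category.assoc, reassoc_of% hiEρ, reassoc_of% hζ₂, hΔX₂]
  -- naturality of the projection to AA₀
  have hwcq : pE ≫ Φ.map ρc = qEX ≫ Wo.p := by
    apply hΦ0.hom_ext
    · simp only [hpEdef, hgEdef, Category.assoc, ← Φ.map_comp, ← hKM1, fst0.wc,
        reassoc_of% hqEX₁, hend1def]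
    · simp only [hpEdef, hgEdef, Category.assoc, ← Φ.map_comp, ← hKM3, snd0.wc,
        reassoc_of% hqEX₂, hend2def]
  have hwdq : qE ≫ ρd = qEX ≫ Wo.q := by
    apply hd0.hom_ext
    · simp only [hqEdef, hgEdef, Category.assoc, ← hKM2, fst0.wd,
        reassoc_of% hqEX₁, hend1def]
    · simp only [hqEdef, hgEdef, Category.assoc, ← hKM4, snd0.wd,
        reassoc_of% hqEX₂, hend2def]
  have hgapE : ∀ {P : D} (g₁ : P ⟶ Φ.obj Pc) (g₂ : P ⟶ Pd),
      IsPullback g₁ g₂ (T.isTerm.from (Φ.obj Pc)) (T.isTerm.from Pd) →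
      ∀ g : EX ⟶ P, g ≫ g₁ = pE → g ≫ g₂ = qE → T.F g :=
    gap_intro T Φ pE qE hFP gE hpEdef.symm hqEdef.symm hFgE
  set Eobj : GlueObj S T Φ := ⟨Pc, Pd, EX, pE, qE, hFpE, hWpE, hFqE, hWqE, hgapE⟩ with hEdef
  set Pq : Eobj ⟶ Wo := ⟨ρc, ρd, qEX, hwcq, hwdq⟩ with hPqdef
  -- the projection is a fibration of the glued category
  obtain ⟨PW0, w01, w02, hPW0⟩ :=
    T.pb_exists (T.isTerm.from (Φ.obj Wo.c)) (T.isTerm.from Wo.d) (T.fib_to_term _)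
  set gB0 : Wo.X ⟶ PW0 := hPW0.lift Wo.p Wo.q (T.isTerm.hom_ext _ _) with hgB0def
  have hgB0₁ : gB0 ≫ w01 = Wo.p := hPW0.lift_fst _ _ _
  have hgB0₂ : gB0 ≫ w02 = Wo.q := hPW0.lift_snd _ _ _
  have hFgB0 : T.F gB0 := Wo.gap w01 w02 hPW0 gB0 hgB0₁ hgB0₂
  set uq : FP ⟶ PW0 := hPW0.lift (fp₁ ≫ Φ.map ρc) (fp₂ ≫ ρd) (T.isTerm.hom_ext _ _)
    with huqdef
  have huq₁ : uq ≫ w01 = fp₁ ≫ Φ.map ρc := hPW0.lift_fst _ _ _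
  have huq₂ : uq ≫ w02 = fp₂ ≫ ρd := hPW0.lift_snd _ _ _
  obtain ⟨Qq, qq₁, qq₂, hQq⟩ := T.pb_exists uq gB0 hFgB0
  have hmgapcomm : gE ≫ uq = qEX ≫ gB0 := by
    apply hPW0.hom_ext
    · simp only [Category.assoc, huq₁, hgB0₁, reassoc_of% hpEdef.symm, hwcq]
    · simp only [Category.assoc, huq₂, hgB0₂, reassoc_of% hqEdef.symm, hwdq]
  set mgap : EX ⟶ Qq := hQq.lift gE qEX hmgapcomm with hmgapdef
  have hmgap₁ : mgap ≫ qq₁ = gE := hQq.lift_fst _ _ _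
  have hmgap₂ : mgap ≫ qq₂ = qEX := hQq.lift_snd _ _ _
  have hQqw1 : qq₁ ≫ fp₁ ≫ Φ.map ρc = qq₂ ≫ Wo.p := by
    have h0 := congrArg (· ≫ w01) hQq.w
    simpa only [Category.assoc, huq₁, hgB0₁] using h0
  have hQqw2 : qq₁ ≫ fp₂ ≫ ρd = qq₂ ≫ Wo.q := by
    have h0 := congrArg (· ≫ w02) hQq.w
    simpa only [Category.assoc, huq₂, hgB0₂] using h0
  set ζQ : Qq ⟶ XX := hXX.lift (qq₂ ≫ fst0.fX) (qq₂ ≫ snd0.fX) (T.isTerm.hom_ext _ _)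
    with hζQdef
  have hζQ₁ : ζQ ≫ x₁ = qq₂ ≫ fst0.fX := hXX.lift_fst _ _ _
  have hζQ₂ : ζQ ≫ x₂ = qq₂ ≫ snd0.fX := hXX.lift_snd _ _ _
  set ζ₂M : M ⟶ Wo.X := hX0.lift (mXX ≫ x₁) (mXX ≫ x₂)
    (by simpa only [Category.assoc] using hMcomm) with hζ₂Mdef
  have hζ₂M₁ : ζ₂M ≫ fst0.fX = mXX ≫ x₁ := hX0.lift_fst _ _ _
  have hζ₂M₂ : ζ₂M ≫ snd0.fX = mXX ≫ x₂ := hX0.lift_snd _ _ _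
  have hξqcomm : m₁ ≫ uq = ζ₂M ≫ gB0 := by
    apply hPW0.hom_ext
    · simp only [Category.assoc, huq₁, hgB0₁]
      apply hΦ0.hom_ext
      · simp only [Category.assoc, ← Φ.map_comp, ← hKM1, fst0.wc, reassoc_of% hζ₂M₁]
      · simp only [Category.assoc, ← Φ.map_comp, ← hKM3, snd0.wc, reassoc_of% hζ₂M₂]
    · simp only [Category.assoc, huq₂, hgB0₂]
      apply hd0.hom_ext
      · simp only [Category.assoc, ← hKM2, fst0.wd, reassoc_of% hζ₂M₁]
      · simp only [Category.assoc, ← hKM4, snd0.wd, reassoc_of% hζ₂M₂]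
  set ξq : M ⟶ Qq := hQq.lift m₁ ζ₂M hξqcomm with hξqdef
  have hξq₁ : ξq ≫ qq₁ = m₁ := hQq.lift_fst _ _ _
  have hξq₂ : ξq ≫ qq₂ = ζ₂M := hQq.lift_snd _ _ _
  have hξq'comm : qq₁ ≫ θ₂ = ζQ ≫ θ₁ := by
    apply hPP.hom_ext
    · apply hPA.hom_ext
      · simp only [Category.assoc, reassoc_of% hθ₂₁, hθ₂a₁, reassoc_of% hθ₁₁, hgA₁,
          Φ.map_comp, reassoc_of% hQqw1, fst0.wc, reassoc_of% hζQ₁]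
      · simp only [Category.assoc, reassoc_of% hθ₂₁, hθ₂a₂, reassoc_of% hθ₁₁, hgA₂,
          reassoc_of% hQqw2, fst0.wd, reassoc_of% hζQ₁]
    · apply hPA.hom_ext
      · simp only [Category.assoc, reassoc_of% hθ₂₂, hθ₂b₁, reassoc_of% hθ₁₂, hgA₁,
          Φ.map_comp, reassoc_of% hQqw1, snd0.wc, reassoc_of% hζQ₂]
      · simp only [Category.assoc, reassoc_of% hθ₂₂, hθ₂b₂, reassoc_of% hθ₁₂, hgA₂,
          reassoc_of% hQqw2, snd0.wd, reassoc_of% hζQ₂]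
  set ξq' : Qq ⟶ M := hM.lift qq₁ ζQ hξq'comm with hξq'def
  have hξq'₁ : ξq' ≫ m₁ = qq₁ := hM.lift_fst _ _ _
  have hξq'₂ : ξq' ≫ mXX = ζQ := hM.lift_snd _ _ _
  have hiso1 : ξq ≫ ξq' = 𝟙 M := by
    apply hM.hom_ext
    · simp only [Category.assoc, hξq'₁, hξq₁, Category.id_comp]
    · simp only [Category.assoc, hξq'₂, Category.id_comp]
      apply hXX.hom_ext
      · simp only [Category.assoc, hζQ₁, reassoc_of% hξq₂, hζ₂M₁]
      · simp only [Category.assoc, hζQ₂, reassoc_of% hξq₂, hζ₂M₂]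
  have hiso2 : ξq' ≫ ξq = 𝟙 Qq := by
    apply hQq.hom_ext
    · simp only [Category.assoc, hξq₁, hξq'₁, Category.id_comp]
    · simp only [Category.assoc, hξq₂, Category.id_comp]
      apply hX0.hom_ext
      · simp only [Category.assoc, hζ₂M₁, reassoc_of% hξq'₂, hζQ₁]
      · simp only [Category.assoc, hζ₂M₂, reassoc_of% hξq'₂, hζQ₂]
  have hmgapeq : mgap = ρE ≫ ξq := by
    apply hQq.hom_ext
    · simp only [Category.assoc, hmgap₁, hξq₁, hgEdef]
    · simp only [Category.assoc, hmgap₂, hξq₂]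
      apply hX0.hom_ext
      · simp only [Category.assoc, hqEX₁, hζ₂M₁, hend1def]
      · simp only [Category.assoc, hqEX₂, hζ₂M₂, hend2def]
  have hFmgap : T.F mgap := by
    rw [hmgapeq]
    exact T.f_comp _ _ hFρE (T.f_iso ξq ⟨ξq', hiso1, hiso2⟩)
  have hFPq : GlueFib S T Φ Pq :=
    glueFib_intro S T Φ Pq hFρc hFρd hFP hPW0 hgB0₁ hgB0₂ huq₁ huq₂ hQq hmgap₂
      (by rw [reassoc_of% hmgap₁])
      (by rw [reassoc_of% hmgap₁]) hFmgap
  -- transport to the given pullback AA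
  have he₁ : (hGpb.isoIsPullback _ _ hAA).hom ≫ pr₁ = fst0 :=
    by apply IsPullback.isoIsPullback_hom_fst
  have he₂ : (hGpb.isoIsPullback _ _ hAA).hom ≫ pr₂ = snd0 :=
    by apply IsPullback.isoIsPullback_hom_snd
  set e := hGpb.isoIsPullback _ _ hAA with hedef
  refine ⟨Eobj, ⟨ic, idd, iE, hiEpE.symm, hiEqE.symm⟩, Pq ≫ e.hom,
    ⟨hWic, hWid, hWiE⟩, ?_, ?_, ?_⟩
  · exact glueFib_comp S T Φ _ _ hFPq (glueFib_of_iso S T Φ e.hom inferInstance)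
  · have hq1 : (Pq ≫ e.hom) ≫ pr₁ = Pq ≫ fst0 := by rw [Category.assoc, he₁]
    rw [hq1]
    refine glue_hom_ext S T Φ ?_ ?_ ?_
    · exact hsc₁
    · exact hsd₁
    · show iE ≫ qEX ≫ fst0.fX = 𝟙 A.X
      rw [hqEX₁]; exact hiEend1
  · have hq2 : (Pq ≫ e.hom) ≫ pr₂ = Pq ≫ snd0 := by rw [Category.assoc, he₂]
    rw [hq2]
    refine glue_hom_ext S T Φ ?_ ?_ ?_
    · exact hsc₂
    · exact hsd₂
    · show iE ≫ qEX ≫ snd0.fX = 𝟙 A.X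
      rw [hqEX₂]; exact hiEend2

end GlueDiag

/-- Let `Φ : C ⥤ D` be a functor between fibration categories that
preserves weak equivalences, sends the terminal object to an object weakly equivalent
to the terminal object, and sends pullbacks along fibrations to pullback squares that
are homotopy pullbacks. Then the glued category `C' = (C × D) ×_{D × D} PD` carries a
fibration category structure whose fibrations are the maps with fibration components
and fibration gap map, whose weak equivalences are componentwise, and whose two
projections `α : C' ⥤ C` and `β : C' ⥤ D` are exact. -/
theorem stmt13
    (hw : ∀ {x y : C} (f : x ⟶ y), S.W f → T.W (Φ.map f))
    (hterm : T.W (T.isTerm.from (Φ.obj S.term)))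
    (hpb : ∀ {p x y z : C} (fst : p ⟶ x) (snd : p ⟶ y) (f : x ⟶ z) (g : y ⟶ z),
      S.F g → IsPullback fst snd f g →
        IsPullback (Φ.map fst) (Φ.map snd) (Φ.map f) (Φ.map g) ∧
        IsHomotopyPB T (Φ.map fst) (Φ.map snd) (Φ.map f) (Φ.map g)) :
    ∃ S' : FibCatStr (GlueObj S T Φ),
      (∀ {A B : GlueObj S T Φ} (f : A ⟶ B), S'.F f ↔ GlueFib S T Φ f) ∧
      (∀ {A B : GlueObj S T Φ} (f : A ⟶ B), S'.W f ↔ GlueW S T Φ f) ∧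
      IsExact S' S (projα S T Φ) ∧ IsExact S' T (projβ S T Φ) := by
  refine ⟨{
      W := fun {x y} f => GlueW S T Φ f
      F := fun {x y} f => GlueFib S T Φ f
      w_iso := fun f hf => glueW_iso S T Φ f hf
      f_iso := fun f hf => glueFib_of_iso S T Φ f hf
      w_comp := fun f g hf hg => glueW_comp S T Φ f g hf hg
      f_comp := fun f g hf hg => glueFib_comp S T Φ f g hf hg
      w_two_three_left := fun f g hf hfg =>
        ⟨S.w_two_three_left _ _ hf.1 hfg.1, T.w_two_three_left _ _ hf.2.1 hfg.2.1,
          T.w_two_three_left _ _ hf.2.2 hfg.2.2⟩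
      w_two_three_right := fun f g hg hfg =>
        ⟨S.w_two_three_right _ _ hg.1 hfg.1, T.w_two_three_right _ _ hg.2.1 hfg.2.1,
          T.w_two_three_right _ _ hg.2.2 hfg.2.2⟩
      term := glueTerm S T Φ hterm
      isTerm := glueTerm_isTerminal S T Φ hterm
      fib_to_term := fun A => glueFib_to_term S T Φ hterm _
      pb_exists := fun {x y z} f p hp => by
        obtain ⟨Wo, fst, snd, hGpb, -, -, -, -, -⟩ := glue_pb S T Φ hw hpb f p hp
        exact ⟨Wo, fst, snd, hGpb⟩
      fib_base_change := fun fst snd f p h hp =>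
        (glue_pb_transport S T Φ hw hpb fst snd f p h hp).1
      trivfib_base_change := fun fst snd f p h hp hwp => by
        obtain ⟨h1, h2, -, -⟩ := glue_pb_transport S T Φ hw hpb fst snd f p h hp
        exact ⟨h1, h2 hwp⟩
      diag_fact := fun pr₁ pr₂ hAA => glue_diag S T Φ hw hterm hpb pr₁ pr₂ hAA },
    fun f => Iff.rfl, fun f => Iff.rfl, ?_, ?_⟩
  · refine ⟨fun f hf => hf.1, fun f hf => hf.1, ⟨S.isTerm⟩, ?_⟩
    intro w x y z fst snd f p hp h
    exact (glue_pb_transport S T Φ hw hpb fst snd f p h hp).2.2.1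
  · refine ⟨fun f hf => hf.2.1, fun f hf => hf.2.1, ⟨T.isTerm⟩, ?_⟩
    intro w x y z fst snd f p hp h
    exact (glue_pb_transport S T Φ hw hpb fst snd f p h hp).2.2.2
end

section
/- In the fibration category C' built from a weakly exact functor F : C → D (as the pullback of C × D and PD over D × D), the span (F(*_C) ↞ F(*_C) ↠ *_D), where the left leg is the identity and the right leg is the weak equivalence F(*_C) → *_D, defines a terminal object of C', and every object of C' is fibrant. -/
set_option linter.unusedSectionVars false
open CategoryTheory Limits
universe w v u

variable {C : Type u} [Category.{v} C]


variable {C : Type u} [Category.{v} C] {D : Type w} [Category.{v} D]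

variable (S : FibCatStr C) (T : FibCatStr D) (Φ : C ⥤ D)

/-- In a pullback square, if the right leg is an isomorphism then so is `fst`. -/
theorem aux_isIso_fst {E : Type w} [Category.{v} E] {P x y z : E} {fst : P ⟶ x}
    {snd : P ⟶ y} {f : x ⟶ z} {p : y ⟶ z} (hP : IsPullback fst snd f p)
    [IsIso p] : IsIso fst := by
  refine ⟨hP.lift (𝟙 x) (f ≫ inv p) (by simp), ?_, by simp⟩
  apply hP.hom_ext
  · simp
  · simp [reassoc_of% hP.w]

/-- Any morphism into a glue object whose components are the terminal objects and whose
left leg is an isomorphism is a fibration. -/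
theorem aux_fib (S : FibCatStr C) (T : FibCatStr D) (Φ : C ⥤ D)
    (Z : GlueObj S T Φ) (hc : Z.c = S.term) (hd : Z.d = T.term)
    (hp : IsIso Z.p) {A : GlueObj S T Φ} (f : A ⟶ Z) : GlueFib S T Φ f := by
  have htermiso : IsIso (T.isTerm.from T.term) := by
    rw [T.isTerm.hom_ext (T.isTerm.from T.term) (𝟙 _)]; infer_instance
  refine ⟨?_, ?_, ?_⟩
  · have h1 : S.F (f.fc ≫ eqToHom hc) := by
      rw [S.isTerm.hom_ext (f.fc ≫ eqToHom hc) (S.isTerm.from A.c)]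
      exact S.fib_to_term _
    have h2 : f.fc = (f.fc ≫ eqToHom hc) ≫ eqToHom hc.symm := by simp
    rw [h2]
    exact S.f_comp _ _ h1 (S.f_iso _ inferInstance)
  · have h1 : T.F (f.fd ≫ eqToHom hd) := by
      rw [T.isTerm.hom_ext (f.fd ≫ eqToHom hd) (T.isTerm.from A.d)]
      exact T.fib_to_term _
    have h2 : f.fd = (f.fd ≫ eqToHom hd) ≫ eqToHom hd.symm := by simp
    rw [h2]
    exact T.f_comp _ _ h1 (T.f_iso _ inferInstance)
  · intro PA a₁ a₂ hPA PB b₁ b₂ hPB gB hb₁ hb₂ u hu₁ hu₂ Q q₁ q₂ hQ m hm₂ hma₁ hma₂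
    haveI : IsIso (T.isTerm.from Z.d) := by
      rw [T.isTerm.hom_ext (T.isTerm.from Z.d) (eqToHom hd ≫ T.isTerm.from T.term)]
      infer_instance
    haveI : IsIso b₁ := aux_isIso_fst hPB
    haveI : IsIso (gB ≫ b₁) := hb₁ ▸ hp
    haveI : IsIso gB := IsIso.of_isIso_comp_right gB b₁
    haveI : IsIso q₁ := aux_isIso_fst hQ
    have hF : T.F (m ≫ q₁) := A.gap a₁ a₂ hPA (m ≫ q₁)
      (by rw [Category.assoc]; exact hma₁) (by rw [Category.assoc]; exact hma₂)
    have hm : m = (m ≫ q₁) ≫ inv q₁ := by simp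
    rw [hm]
    exact T.f_comp _ _ hF (T.f_iso _ inferInstance)

/-- In the glued category `C'` built from a weakly exact functor
`Φ : C ⥤ D` (preserving weak equivalences, homotopy pullbacks, and the terminal object
up to weak equivalence), the span `Φ(*_C) ↞ Φ(*_C) ↠ *_D` with identity left leg and
the weak equivalence `Φ(*_C) ⟶ *_D` as right leg defines a terminal object of `C'`,
and every object of `C'` is fibrant. -/
theorem stmt14
    (hw : ∀ {x y : C} (f : x ⟶ y), S.W f → T.W (Φ.map f))
    (hterm : T.W (T.isTerm.from (Φ.obj S.term)))
    (hpb : ∀ {p x y z : C} (fst : p ⟶ x) (snd : p ⟶ y) (f : x ⟶ z) (g : y ⟶ z),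
      S.F g → IsPullback fst snd f g →
        IsPullback (Φ.map fst) (Φ.map snd) (Φ.map f) (Φ.map g) ∧
        IsHomotopyPB T (Φ.map fst) (Φ.map snd) (Φ.map f) (Φ.map g)) :
    ∃ (Z : GlueObj S T Φ) (hc : Z.c = S.term) (hd : Z.d = T.term)
      (hX : Z.X = Φ.obj S.term),
      Z.p = eqToHom hX ≫ eqToHom (congrArg Φ.obj hc).symm ∧
      Z.q = eqToHom hX ≫ T.isTerm.from (Φ.obj S.term) ≫ eqToHom hd.symm ∧
      ∃ ht : IsTerminal Z, ∀ A : GlueObj S T Φ, GlueFib S T Φ (ht.from A) := by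
  have htermiso : IsIso (T.isTerm.from T.term) := by
    rw [T.isTerm.hom_ext (T.isTerm.from T.term) (𝟙 _)]; infer_instance
  refine ⟨{ c := S.term, d := T.term, X := Φ.obj S.term,
            p := 𝟙 _, q := T.isTerm.from _,
            fib_p := T.f_iso _ inferInstance,
            w_p := T.w_iso _ inferInstance,
            fib_q := T.fib_to_term _,
            w_q := hterm,
            gap := ?_ }, rfl, rfl, rfl, by simp, by simp, ?_, ?_⟩
  · intro P pr₁ pr₂ hPB g h1 h2
    haveI : IsIso pr₁ := aux_isIso_fst hPB
    have hg : g = inv pr₁ := by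
      rw [← Category.comp_id g, ← IsIso.hom_inv_id pr₁, ← Category.assoc, h1,
        Category.id_comp]
    rw [hg]
    exact T.f_iso _ inferInstance
  · exact IsTerminal.ofUniqueHom
      (fun A => ⟨S.isTerm.from A.c, T.isTerm.from A.d,
        A.p ≫ Φ.map (S.isTerm.from A.c), by simp, T.isTerm.hom_ext _ _⟩)
      (fun A m => by
        apply GlueHom.ext
        · exact S.isTerm.hom_ext _ _
        · exact T.isTerm.hom_ext _ _
        · have := m.wc
          simp only [Category.comp_id] at this
          rw [← this, S.isTerm.hom_ext m.fc (S.isTerm.from A.c)])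
  · exact fun A => aux_fib S T Φ _ rfl rfl inferInstance _
end
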